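/- arXiv:2209.06142 — 8 statements merged into one kernel-verified Lean document; each statement's English description precedes it below -/
import Mathlib

section
/- For every connected simple graph G with n vertices and m edges (n ≥ 2), the number of spanning trees of G is at most (1/n)·(2m/(n−1))^(n−1). -/
/-!
Let `B` be an oriented incidence matrix of `G` and `L = B Bᵀ` its Laplacian. Deleting the row of a
vertex `v` from `B`, the Cauchy–Binet formula writes the principal minor `det L_v` as a sum of
squares of maximal minors of `B`; the minor on the edges of a spanning tree is a nonzero integer,
so `τ(G) ≤ det L_v` for every `v`, and `n τ(G) ≤ ∑ᵥ det L_v = tr (adj L)`. Since `L` is positive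
semidefinite and singular, `tr (adj L)` is the product of the other `n - 1` eigenvalues, which by
AM–GM is at most `(tr L / (n - 1)) ^ (n - 1) = (2m / (n - 1)) ^ (n - 1)`.
-/

open Finset Matrix

theorem Real.prod_le_mean_pow {ι : Type*} (s : Finset ι) (z : ι → ℝ) (hz : ∀ i ∈ s, 0 ≤ z i) :
    ∏ i ∈ s, z i ≤ ((∑ i ∈ s, z i) / #s) ^ #s := by
  rcases s.eq_empty_or_nonempty with rfl | hs
  · simp
  have hcard : (0 : ℝ) < #s := by exact_mod_cast hs.card_pos
  have hgm := Real.geom_mean_le_arith_mean_weighted s (fun _ => (#s : ℝ)⁻¹) z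
    (fun _ _ => by positivity) (by simp [hcard.ne']) hz
  rw [← mul_sum, inv_mul_eq_div, Real.finsetProd_rpow _ _ hz] at hgm
  calc ∏ i ∈ s, z i = ((∏ i ∈ s, z i) ^ (#s : ℝ)⁻¹) ^ #s := by
        rw [← Real.rpow_natCast, ← Real.rpow_mul (prod_nonneg hz), inv_mul_cancel₀ hcard.ne',
          Real.rpow_one]
    _ ≤ _ := pow_le_pow_left₀ (Real.rpow_nonneg (prod_nonneg hz) _) hgm _

namespace Matrix

section CauchyBinet

variable {W E R : Type*} [Fintype W] [DecidableEq W] [CommRing R]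

theorem det_submatrix_eq_zero_of_not_injective (C : Matrix E W R) {f : W → E}
    (hf : ¬ Function.Injective f) : (C.submatrix f id).det = 0 := by
  obtain ⟨a, b, hab, hne⟩ := Function.not_injective_iff.mp hf
  exact det_zero_of_row_eq hne (by ext; simp [hab])

variable [Fintype E]

theorem det_mul_eq_sum_prod_mul_det_submatrix (A : Matrix W E R) (C : Matrix E W R) :
    (A * C).det = ∑ f : W → E, (∏ i, A i (f i)) * (C.submatrix f id).det := by
  have hrows : A * C = of fun i => ∑ e, A i e • C e := by
    ext i j
    simp [mul_apply]
  rw [hrows]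
  calc (of fun i => ∑ e, A i e • C e).det
      = detRowAlternating (fun i => ∑ e, A i e • C e) := rfl
    _ = ∑ f : W → E, detRowAlternating (fun i => A i (f i) • C (f i)) :=
        detRowAlternating.toMultilinearMap.map_sum (g := fun i e => A i e • C e)
    _ = _ := by
        refine sum_congr rfl fun f _ => ?_
        exact (detRowAlternating.toMultilinearMap.map_smul_univ _ _).trans rfl

variable [DecidableEq E]

theorem det_mul_eq_sum_det_submatrix_mul (A : Matrix W E R) (C : Matrix E W R) :
    (A * C).det = ∑ S ∈ powersetCard (Fintype.card W) (univ : Finset E),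
      (A.submatrix id (Subtype.val : S → E) * C.submatrix (Subtype.val : S → E) id).det := by
  set T : (W → E) → R := fun f => (∏ i, A i (f i)) * (C.submatrix f id).det with hT
  have hT0 : ∀ f, ¬ Function.Injective f → T f = 0 := fun f hf => by
    simp only [hT, det_submatrix_eq_zero_of_not_injective C hf, mul_zero]
  have hS : ∀ S ∈ powersetCard (Fintype.card W) (univ : Finset E),
      (A.submatrix id (Subtype.val : S → E) * C.submatrix (Subtype.val : S → E) id).det =
        ∑ f ∈ (univ.filter Function.Injective).filter (fun f => univ.image f = S), T f := by
    intro S hS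
    rw [mem_powersetCard_univ] at hS
    rw [det_mul_eq_sum_prod_mul_det_submatrix]
    calc _ = ∑ f : {f : W → E // ∀ i, f i ∈ S}, T f :=
          (Fintype.sum_equiv (Equiv.subtypePiEquivPi).symm _ _ fun _ => rfl)
      _ = ∑ f ∈ univ with ∀ i, f i ∈ S, T f := (sum_subtype _ (by simp) T).symm
      _ = _ := by
        rw [filter_filter, sum_filter, sum_filter]
        refine sum_congr rfl fun f _ => ?_
        by_cases hf : Function.Injective f
        · have : (∀ i, f i ∈ S) ↔ univ.image f = S := by
            rw [show (∀ i, f i ∈ S) ↔ univ.image f ⊆ S by simp [image_subset_iff]]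
            exact ⟨fun h => eq_of_subset_of_card_le h
              (by rw [card_image_of_injective _ hf, card_univ, hS]), fun h => h.subset⟩
          simp [hf, this]
        · simp [hf, hT0 f hf]
  rw [sum_congr rfl hS, sum_fiberwise_of_maps_to (g := fun f => univ.image f),
    sum_filter_of_ne fun f _ hf => not_not.mp (mt (hT0 f) hf),
    det_mul_eq_sum_prod_mul_det_submatrix]
  intro f hf
  rw [mem_filter] at hf
  rw [mem_powersetCard_univ, card_image_of_injective _ hf.2, card_univ]

theorem card_le_det_mul_transpose (A : Matrix W E ℝ) (𝒮 : Finset (Finset E))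
    (hcard : ∀ S ∈ 𝒮, #S = Fintype.card W)
    (hone : ∀ S ∈ 𝒮, 1 ≤ (A.submatrix id (Subtype.val : S → E) *
      (A.submatrix id (Subtype.val : S → E))ᵀ).det) :
    (#𝒮 : ℝ) ≤ (A * Aᵀ).det := by
  have hnonneg : ∀ S : Finset E,
      0 ≤ (A.submatrix id (Subtype.val : S → E) * (A.submatrix id (Subtype.val : S → E))ᵀ).det :=
    fun S => by
      simpa using
        (posSemidef_self_mul_conjTranspose (A.submatrix id (Subtype.val : S → E))).det_nonneg
  rw [det_mul_eq_sum_det_submatrix_mul]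
  simp_rw [← transpose_submatrix]
  calc (#𝒮 : ℝ) = ∑ _S ∈ 𝒮, (1 : ℝ) := by simp
    _ ≤ _ := sum_le_sum hone
    _ ≤ _ := sum_le_sum_of_subset_of_nonneg
        (fun S hS => mem_powersetCard_univ.mpr (hcard S hS)) fun S _ _ => hnonneg S

end CauchyBinet

theorem one_le_det_mul_transpose_of_injective {W E : Type*} [Fintype W] [DecidableEq W]
    [Fintype E] (M : Matrix W E ℤ) (hM : Function.Injective (M.map (Int.cast : ℤ → ℝ)).vecMul) :
    1 ≤ (M.map (Int.cast : ℤ → ℝ) * (M.map (Int.cast : ℤ → ℝ))ᵀ).det := by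
  have hpos := (PosDef.mul_conjTranspose_self _ hM).det_pos
  rw [conjTranspose_eq_transpose_of_trivial] at hpos
  have hcast : ((M * Mᵀ).det : ℝ) =
      (M.map (Int.cast : ℤ → ℝ) * (M.map (Int.cast : ℤ → ℝ))ᵀ).det := by
    have h := (Int.castRingHom ℝ).map_det (M * Mᵀ)
    rw [RingHom.mapMatrix_apply, Matrix.map_mul, transpose_map] at h
    exact h
  rw [← hcast] at hpos ⊢
  exact_mod_cast Int.cast_pos.mp hpos

variable {n : Type*} [Fintype n] [DecidableEq n]

theorem adjugate_apply_self {R : Type*} [CommRing R] (A : Matrix n n R) (i : n) :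
    A.adjugate i i = (A.submatrix (Subtype.val : {j // j ≠ i} → n) Subtype.val).det := by
  rw [adjugate_apply, twoBlockTriangular_det _ (· ≠ i)]
  · have hdel : (A.updateRow i (Pi.single i 1)).toSquareBlockProp (· ≠ i) =
        A.submatrix Subtype.val Subtype.val := by
      ext a b
      simp [toSquareBlockProp, toBlock, updateRow_ne a.2]
    have hone : (A.updateRow i (Pi.single i 1)).toSquareBlockProp (¬ · ≠ i) = 1 := by
      ext ⟨a, ha⟩ ⟨b, hb⟩
      rw [not_not] at ha hb
      subst ha hb
      simp [toSquareBlockProp, toBlock]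
    rw [hdel, hone, det_one, mul_one]
  · intro r hr c hc
    rw [not_not] at hr
    subst hr
    simp [hc]

theorem IsHermitian.trace_adjugate {L : Matrix n n ℝ} (hL : L.IsHermitian) :
    L.adjugate.trace = ∑ j, ∏ i ∈ univ.erase j, hL.eigenvalues i := by
  conv_lhs => rw [hL.spectral_theorem, Unitary.conjStarAlgAut_apply]
  rw [adjugate_mul_distrib, adjugate_mul_distrib, trace_mul_comm, Matrix.mul_assoc,
    ← adjugate_mul_distrib, Unitary.coe_star_mul_self, adjugate_one, Matrix.mul_one,
    adjugate_diagonal, trace_diagonal]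
  simp

theorem PosSemidef.trace_adjugate_le_of_det_eq_zero {L : Matrix n n ℝ} (hL : L.PosSemidef)
    (hdet : L.det = 0) :
    L.adjugate.trace ≤ (L.trace / (Fintype.card n - 1 : ℕ)) ^ (Fintype.card n - 1) := by
  set μ := hL.1.eigenvalues
  obtain ⟨j, -, hj⟩ : ∃ j ∈ univ, μ j = 0 := by
    simpa [hL.1.det_eq_prod_eigenvalues, prod_eq_zero_iff] using hdet
  have hcard : #(univ.erase j) = Fintype.card n - 1 := by
    rw [card_erase_of_mem (mem_univ j), card_univ]
  have htrace : L.trace = ∑ i ∈ univ.erase j, μ i := by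
    simp [hL.1.trace_eq_sum_eigenvalues, sum_erase _ hj, μ]
  calc L.adjugate.trace = ∏ i ∈ univ.erase j, μ i := by
        rw [hL.1.trace_adjugate]
        exact sum_eq_single j
          (fun k _ hk => prod_eq_zero (mem_erase.mpr ⟨Ne.symm hk, mem_univ j⟩) hj) (by simp)
    _ ≤ _ := by
        rw [htrace, ← hcard]
        exact Real.prod_le_mean_pow _ _ fun i _ => hL.eigenvalues_nonneg i

end Matrix

namespace SimpleGraph

variable {V : Type*} {G : SimpleGraph V} {R : Type*} [CommRing R]

theorem adj_out_of_mem_edgeSet {e : Sym2 V} (he : e ∈ G.edgeSet) :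
    G.Adj (Quot.out e).1 (Quot.out e).2 := by
  rwa [← mem_edgeSet, show s((Quot.out e).1, (Quot.out e).2) = e from Quot.out_eq e]

section SpanningTrees

variable [Fintype V]

variable (G) in
open Classical in
noncomputable def spanningTreeEdgeSets : Finset (Finset (Sym2 V)) :=
  univ.filter fun S => ↑S ⊆ G.edgeSet ∧ (fromEdgeSet (S : Set (Sym2 V))).IsTree

theorem mem_spanningTreeEdgeSets {S : Finset (Sym2 V)} :
    S ∈ G.spanningTreeEdgeSets ↔ ↑S ⊆ G.edgeSet ∧ (fromEdgeSet (S : Set (Sym2 V))).IsTree := by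
  simp [spanningTreeEdgeSets]

theorem natCard_spanningTrees :
    Nat.card {t : Set (Sym2 V) // t ⊆ G.edgeSet ∧ (fromEdgeSet t).IsTree} =
      #G.spanningTreeEdgeSets := by
  classical
  rw [spanningTreeEdgeSets, ← Fintype.card_subtype, ← Nat.card_eq_fintype_card]
  exact Nat.card_congr (Fintype.finsetEquivSet.subtypeEquiv fun S => Iff.rfl).symm

theorem card_add_one_of_mem_spanningTreeEdgeSets {S : Finset (Sym2 V)}
    (hS : S ∈ G.spanningTreeEdgeSets) : #S + 1 = Fintype.card V := by
  classical
  obtain ⟨hsub, htree⟩ := mem_spanningTreeEdgeSets.mp hS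
  have hedges : (fromEdgeSet (S : Set (Sym2 V))).edgeFinset = S := by
    rw [← coe_inj, coe_edgeFinset, edgeSet_eq_iff]
    exact ⟨rfl, Set.subset_compl_iff_disjoint_right.mp (hsub.trans G.edgeSet_subset_compl_diagSet)⟩
  rw [← hedges]
  exact htree.card_edgeFinset

end SpanningTrees

variable [DecidableEq V]

variable (G R) in
/-- The column of an edge `e` is `δ a - δ b`, where `(a, b) := Quot.out e` orients `e`
arbitrarily: only `B * Bᵀ`, the Laplacian, matters, and it does not depend on the orientation. -/
noncomputable def orientedIncMatrix : Matrix V (Sym2 V) R :=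
  open Classical in
  of fun u e => if e ∈ G.edgeSet then
    (Pi.single (Quot.out e).1 1 - Pi.single (Quot.out e).2 1 : V → R) u else 0

theorem map_intCast_orientedIncMatrix :
    (G.orientedIncMatrix ℤ).map (Int.cast : ℤ → R) = G.orientedIncMatrix R := by
  ext u e
  simp [orientedIncMatrix, Pi.single_apply]

variable [Fintype V]

theorem vecMul_orientedIncMatrix_of_mem (y : V → R) {e : Sym2 V} (he : e ∈ G.edgeSet) :
    (y ᵥ* G.orientedIncMatrix R) e = y (Quot.out e).1 - y (Quot.out e).2 := by
  simp [orientedIncMatrix, vecMul, dotProduct, he, mul_sub, Pi.single_apply]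

theorem vecMul_orientedIncMatrix_of_notMem (y : V → R) {e : Sym2 V} (he : e ∉ G.edgeSet) :
    (y ᵥ* G.orientedIncMatrix R) e = 0 := by
  simp [orientedIncMatrix, vecMul, dotProduct, he]

theorem one_vecMul_orientedIncMatrix : (fun _ => 1) ᵥ* G.orientedIncMatrix R = 0 := by
  ext e
  by_cases he : e ∈ G.edgeSet
  · simp [vecMul_orientedIncMatrix_of_mem _ he]
  · simp [vecMul_orientedIncMatrix_of_notMem _ he]

theorem det_orientedIncMatrix_mul_transpose [IsDomain R] [Nonempty V] :
    (G.orientedIncMatrix R * (G.orientedIncMatrix R)ᵀ).det = 0 := by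
  refine exists_vecMul_eq_zero_iff.mp ⟨fun _ => 1, fun h => ?_, ?_⟩
  · exact one_ne_zero (congrFun h (Classical.arbitrary V))
  · rw [← vecMul_vecMul, one_vecMul_orientedIncMatrix, zero_vecMul]

theorem trace_orientedIncMatrix_mul_transpose :
    (G.orientedIncMatrix R * (G.orientedIncMatrix R)ᵀ).trace = 2 * Nat.card G.edgeSet := by
  classical
  have hdiag : ∀ e, ((G.orientedIncMatrix R)ᵀ * G.orientedIncMatrix R) e e =
      if e ∈ G.edgeSet then 2 else 0 := by
    intro e
    rw [mul_apply_eq_vecMul]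
    split_ifs with he
    · have hne := (adj_out_of_mem_edgeSet he).ne
      rw [vecMul_orientedIncMatrix_of_mem _ he]
      simp [orientedIncMatrix, he, hne, hne.symm]
      norm_num
    · exact vecMul_orientedIncMatrix_of_notMem _ he
  rw [trace_mul_comm, trace]
  simp only [diag_apply, hdiag]
  rw [sum_ite, sum_const_zero, add_zero, sum_const, nsmul_eq_mul, Nat.card_eq_fintype_card,
    Fintype.card_subtype, mul_comm]

theorem apply_eq_of_vecMul_orientedIncMatrix {S : Set (Sym2 V)} (hS : S ⊆ G.edgeSet)
    (hconn : (fromEdgeSet S).Connected) {y : V → R}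
    (hy : ∀ e ∈ S, (y ᵥ* G.orientedIncMatrix R) e = 0) (u w : V) : y u = y w := by
  have hadj : ∀ p q, (fromEdgeSet S).Adj p q → y p = y q := by
    rintro p q ⟨hpq, -⟩
    have h := hy _ hpq
    rw [vecMul_orientedIncMatrix_of_mem _ (hS hpq), sub_eq_zero] at h
    have hout : s((Quot.out s(p, q)).1, (Quot.out s(p, q)).2) = s(p, q) := Quot.out_eq _
    rcases Sym2.eq_iff.mp hout with ⟨h1, h2⟩ | ⟨h1, h2⟩
    · rwa [h1, h2] at h
    · rw [h1, h2] at h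
      exact h.symm
  obtain ⟨walk⟩ := hconn.preconnected u w
  induction walk with
  | nil => rfl
  | cons h _ ih => exact (hadj _ _ h).trans ih

theorem injective_vecMul_orientedIncMatrix_submatrix {S : Finset (Sym2 V)}
    (hS : ↑S ⊆ G.edgeSet) (hconn : (fromEdgeSet (S : Set (Sym2 V))).Connected) (v : V) :
    Function.Injective ((G.orientedIncMatrix R).submatrix
      (Subtype.val : {u // u ≠ v} → V) (Subtype.val : S → Sym2 V)).vecMul := by
  intro x x' hxx'
  set d := x - x'
  have hd : d ᵥ* (G.orientedIncMatrix R).submatrix Subtype.val (Subtype.val : S → Sym2 V) = 0 := by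
    rw [sub_vecMul]
    exact sub_eq_zero.mpr hxx'
  set y : V → R := fun u => if h : u = v then 0 else d ⟨u, h⟩
  have hy : ∀ e ∈ (S : Set (Sym2 V)), (y ᵥ* G.orientedIncMatrix R) e = 0 := by
    intro e he
    have h := congrFun hd ⟨e, he⟩
    rw [vecMul, dotProduct, Fintype.sum_eq_add_sum_subtype_ne _ v]
    simpa [vecMul, dotProduct, y, fun w : {u // u ≠ v} => w.2] using h
  have hzero : ∀ u, y u = 0 := fun u =>
    (apply_eq_of_vecMul_orientedIncMatrix hS hconn hy u v).trans (by simp [y])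
  funext w
  have := hzero w
  simp only [y, dif_neg w.2] at this
  exact sub_eq_zero.mp this

theorem one_le_det_of_mem_spanningTreeEdgeSets {S : Finset (Sym2 V)}
    (hS : S ∈ G.spanningTreeEdgeSets) (v : V) :
    1 ≤ ((G.orientedIncMatrix ℝ).submatrix (Subtype.val : {u // u ≠ v} → V)
        (Subtype.val : S → Sym2 V) *
      ((G.orientedIncMatrix ℝ).submatrix Subtype.val (Subtype.val : S → Sym2 V))ᵀ).det := by
  obtain ⟨hsub, htree⟩ := mem_spanningTreeEdgeSets.mp hS
  have hint := one_le_det_mul_transpose_of_injective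
    ((G.orientedIncMatrix ℤ).submatrix (Subtype.val : {u // u ≠ v} → V) (Subtype.val : S → Sym2 V))
  rw [← submatrix_map, map_intCast_orientedIncMatrix] at hint
  exact hint (injective_vecMul_orientedIncMatrix_submatrix hsub htree.connected v)

theorem card_spanningTreeEdgeSets_le_det_submatrix (v : V) :
    (#G.spanningTreeEdgeSets : ℝ) ≤ ((G.orientedIncMatrix ℝ * (G.orientedIncMatrix ℝ)ᵀ).submatrix
      (Subtype.val : {u // u ≠ v} → V) Subtype.val).det := by
  rw [submatrix_mul _ _ _ id _ Function.bijective_id, ← transpose_submatrix]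
  refine card_le_det_mul_transpose _ _ (fun S hS => ?_) fun S hS => ?_
  · have := card_add_one_of_mem_spanningTreeEdgeSets hS
    rw [Fintype.card_subtype_compl, Fintype.card_subtype_eq]
    omega
  · exact one_le_det_of_mem_spanningTreeEdgeSets hS v

theorem card_mul_card_spanningTreeEdgeSets_le_trace_adjugate :
    (Fintype.card V * #G.spanningTreeEdgeSets : ℝ) ≤
      (G.orientedIncMatrix ℝ * (G.orientedIncMatrix ℝ)ᵀ).adjugate.trace := by
  rw [trace, ← nsmul_eq_mul, ← card_univ, ← sum_const]
  exact sum_le_sum fun v _ => by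
    rw [diag_apply, adjugate_apply_self]
    exact card_spanningTreeEdgeSets_le_det_submatrix v

end SimpleGraph

theorem grimmett_spanning_tree_bound_general (V : Type) [Fintype V] (G : SimpleGraph V)
    (hn : 2 ≤ Fintype.card V) :
    (Nat.card {t : Set (Sym2 V) // t ⊆ G.edgeSet ∧ (SimpleGraph.fromEdgeSet t).IsTree} : ℝ) ≤
      (1 / (Fintype.card V : ℝ)) *
        ((2 * (Nat.card G.edgeSet : ℝ)) / ((Fintype.card V : ℝ) - 1)) ^ (Fintype.card V - 1) := by
  classical
  have : Nonempty V := Fintype.card_pos_iff.mp (by omega)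
  have hpsd : (G.orientedIncMatrix ℝ * (G.orientedIncMatrix ℝ)ᵀ).PosSemidef := by
    simpa using posSemidef_self_mul_conjTranspose (G.orientedIncMatrix ℝ)
  have hadj := hpsd.trace_adjugate_le_of_det_eq_zero SimpleGraph.det_orientedIncMatrix_mul_transpose
  rw [SimpleGraph.trace_orientedIncMatrix_mul_transpose, Nat.cast_sub (by omega),
    Nat.cast_one] at hadj
  have hcount :=
    (SimpleGraph.card_mul_card_spanningTreeEdgeSets_le_trace_adjugate (G := G)).trans hadj
  rw [SimpleGraph.natCard_spanningTrees, one_div_mul_eq_div, le_div_iff₀ (by positivity)]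
  linarith

/-- Grimmett's inequality: for a connected simple graph `G` with `n ≥ 2` vertices
and `m` edges, the number of spanning trees of `G` is at most
`(1/n) * (2m/(n-1))^(n-1)`. A spanning tree is encoded as a set of edges of `G`
whose associated graph on the full vertex set is a tree. -/
theorem grimmett_spanning_tree_bound (V : Type) [Fintype V] (G : SimpleGraph V)
    (hconn : G.Connected) (hn : 2 ≤ Fintype.card V) :
    (Nat.card {t : Set (Sym2 V) // t ⊆ G.edgeSet ∧ (SimpleGraph.fromEdgeSet t).IsTree} : ℝ) ≤
      (1 / (Fintype.card V : ℝ)) *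
        ((2 * (Nat.card G.edgeSet : ℝ)) / ((Fintype.card V : ℝ) - 1)) ^ (Fintype.card V - 1) :=
  grimmett_spanning_tree_bound_general V G hn
end

section
/- For every simple graph G, if p(G,k) denotes the number of matchings of G with exactly k edges, then p(G,k)^2 ≥ p(G,k−1)·p(G,k+1) for all k ≥ 1. -/
/-!
If `A` is a `(k-1)`-matching and `B` a `(k+1)`-matching, every connected component of the graph
with edge set `A ∆ B` contains at most one more edge of `B` than of `A`: a connected graph with
`e` edges has at most `e + 1` vertices, while the disjoint edges of `B` in it cover twice their
number. These surpluses add up to `#B - #A = 2`. Swapping `A` and `B` on a component `P` of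
surplus `1` gives two `k`-matchings `A ∆ P`, `B ∆ P` with the same symmetric difference. Listing
the components in a fixed order and choosing `P` by a ballot argument on the prefix sums of the
surpluses makes `P` recoverable from the new pair, so `(A, B) ↦ (A ∆ P, B ∆ P)` is injective and
`p(G, k-1) p(G, k+1) ≤ p(G, k)^2`.
-/

open scoped Classical in
/-- The number of `k`-matchings of a simple graph `G`: sets of `k` pairwise
disjoint (non-adjacent) edges of `G`. -/
noncomputable def matchingCount (V : Type) [Fintype V] (G : SimpleGraph V) (k : ℕ) : ℕ :=
  (G.edgeFinset.powerset.filter (fun m => m.card = k ∧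
    ∀ e ∈ m, ∀ f ∈ m, e ≠ f → ∀ v : V, ¬(v ∈ e ∧ v ∈ f))).card

open Finset

namespace Fin

variable {n : ℕ}

def prefixSum (σ : Fin n → ℤ) (k : ℕ) : ℤ := ∑ i : Fin n with i.val < k, σ i

@[simp] lemma prefixSum_zero (σ : Fin n → ℤ) : prefixSum σ 0 = 0 := by
  simp [prefixSum]

lemma prefixSum_of_le {σ : Fin n → ℤ} {k : ℕ} (hk : n ≤ k) : prefixSum σ k = ∑ i, σ i := by
  rw [prefixSum, filter_true_of_mem fun i _ => i.isLt.trans_le hk]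

lemma prefixSum_succ (σ : Fin n → ℤ) (i : Fin n) :
    prefixSum σ (i + 1) = prefixSum σ i + σ i := by
  have : univ.filter (fun j : Fin n => j.val < i + 1) =
      insert i (univ.filter fun j : Fin n => j.val < i) := by
    ext j
    simp [le_iff_eq_or_lt, Fin.val_inj]
  rw [prefixSum, prefixSum, this, sum_insert (by simp), add_comm]

lemma prefixSum_update {σ τ : Fin n → ℤ} {j : Fin n} (hτ : ∀ i ≠ j, τ i = σ i) (k : ℕ) :
    prefixSum τ k = prefixSum σ k + if (j : ℕ) < k then τ j - σ j else 0 := by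
  have hdiff : ∑ i : Fin n with i.val < k, (τ i - σ i) = if (j : ℕ) < k then τ j - σ j else 0 := by
    rw [sum_filter, sum_eq_single j (fun i _ hij => by simp [hτ i hij]) (by simp)]
  rw [← hdiff, sum_sub_distrib, prefixSum, prefixSum]
  ring

def prefixSumArgmin (σ : Fin n → ℤ) : Set ℕ :=
  {k | k ≤ n ∧ ∀ l ≤ n, prefixSum σ k ≤ prefixSum σ l}

/-- Ballot-type selection: the step `j` leaving the last minimum of the walk `prefixSum σ` is
`+1`, and flipping it to `-1` makes `j + 1` the first minimum of the new walk. -/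
theorem exists_flip_isLeast_argmin {σ : Fin n → ℤ} (hle : ∀ i, σ i ≤ 1) (hsum : ∑ i, σ i = 2) :
    ∃ j, σ j = 1 ∧ ∀ τ : Fin n → ℤ, τ j = -1 → (∀ i ≠ j, τ i = σ i) →
      IsLeast (prefixSumArgmin τ) (j + 1) := by
  obtain ⟨k₀, hk₀, hmin⟩ := (range (n + 1)).exists_min_image (prefixSum σ) nonempty_range_add_one
  set m := prefixSum σ k₀
  have hm : ∀ k ≤ n, m ≤ prefixSum σ k := fun k hk => hmin k (mem_range_succ_iff.2 hk)
  obtain ⟨j, hj, hjmax⟩ := ({k ∈ range (n + 1) | prefixSum σ k = m}).exists_max_image id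
    ⟨k₀, mem_filter.2 ⟨hk₀, rfl⟩⟩
  rw [mem_filter, mem_range_succ_iff] at hj
  have hafter : ∀ k ≤ n, j < k → m + 1 ≤ prefixSum σ k := fun k hk hjk => by
    have := hm k hk
    have : prefixSum σ k ≠ m := fun h =>
      (hjmax k (mem_filter.2 ⟨mem_range_succ_iff.2 hk, h⟩)).not_gt hjk
    omega
  have hjn : j < n := by
    refine hj.1.lt_of_ne fun h => ?_
    have := hm 0 (Nat.zero_le n)
    rw [prefixSum_zero] at this
    rw [h, prefixSum_of_le le_rfl, hsum] at hj
    omega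
  have hstep : prefixSum σ (j + 1) = m + 1 ∧ σ ⟨j, hjn⟩ = 1 := by
    have := hafter (j + 1) hjn (Nat.lt_succ_self j)
    have := hle ⟨j, hjn⟩
    have := prefixSum_succ σ ⟨j, hjn⟩
    simp only at this
    omega
  refine ⟨⟨j, hjn⟩, hstep.2, fun τ hτj hτ => ?_⟩
  have hflip (k : ℕ) : prefixSum τ k = prefixSum σ k - if j < k then 2 else 0 := by
    rw [prefixSum_update hτ, hτj, hstep.2]
    split_ifs <;> ring
  have hτmin : prefixSum τ (j + 1) = m - 1 := by
    rw [hflip, if_pos (Nat.lt_succ_self j), hstep.1]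
    ring
  refine ⟨⟨hjn, fun l hl => ?_⟩, fun k ⟨hk, hkmin⟩ => ?_⟩
  · have := hm l hl
    have := hafter l hl
    rw [hτmin, hflip]
    split_ifs <;> omega
  · by_contra! hkj
    have := hkmin (j + 1) hjn
    have := hm k hk
    rw [hτmin, hflip, if_neg (by simp at hkj; omega)] at *
    omega

end Fin

open scoped symmDiff

namespace Finset

variable {α : Type*} [DecidableEq α]

lemma card_symmDiff_add_two_mul_card_inter (s t : Finset α) :
    #(s ∆ t) + 2 * #(s ∩ t) = #s + #t := by
  rw [symmDiff_def, sup_eq_union, card_union_of_disjoint disjoint_sdiff_sdiff]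
  have := card_sdiff_add_card_inter s t
  have := card_sdiff_add_card_inter t s
  rw [inter_comm t s] at this
  omega

variable {s t u : Finset α}

lemma card_eq_card_inter_add_card_inter_of_subset_symmDiff (h : u ⊆ s ∆ t) :
    #u = #(u ∩ s) + #(u ∩ t) := by
  rw [← card_union_of_disjoint]
  · congr 1
    ext x
    have := @h x
    simp only [mem_symmDiff, mem_union, mem_inter] at this ⊢
    tauto
  · rw [disjoint_left]
    intro x hs ht
    have := h (mem_inter.1 hs).1
    simp only [mem_symmDiff, mem_inter] at this hs ht
    tauto

lemma inter_symmDiff_self_of_subset_symmDiff (h : u ⊆ s ∆ t) : u ∩ (s ∆ u) = u ∩ t := by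
  ext x
  have := @h x
  simp only [mem_symmDiff, mem_inter] at this ⊢
  tauto

lemma inter_symmDiff_of_disjoint (h : Disjoint u t) : u ∩ (s ∆ t) = u ∩ s := by
  rw [← inf_eq_inter, inf_symmDiff_distrib_left, inf_eq_inter, inf_eq_inter,
    disjoint_iff_inter_eq_empty.1 h, ← bot_eq_empty, symmDiff_bot]

end Finset

open Finset SimpleGraph

variable {V : Type*}

def IsEdgeMatching (M : Finset (Sym2 V)) : Prop :=
  ∀ e ∈ M, ∀ f ∈ M, e ≠ f → ∀ v : V, ¬(v ∈ e ∧ v ∈ f)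

namespace IsEdgeMatching

variable {M N P : Finset (Sym2 V)}

lemma subset (hM : IsEdgeMatching M) (h : N ⊆ M) : IsEdgeMatching N :=
  fun e he f hf => hM e (h he) f (h hf)

lemma symmDiff_of_closed [DecidableEq V] (hM : IsEdgeMatching M) (hN : IsEdgeMatching N)
    (hP : P ⊆ M ∆ N) (hclosed : ∀ e ∈ P, ∀ f ∈ M ∆ N, ∀ v, v ∈ e → v ∈ f → f ∈ P) :
    IsEdgeMatching (M ∆ P) := by
  have mixed : ∀ e ∈ M, e ∉ P → ∀ f ∈ P, f ∉ M → ∀ v, v ∈ e → v ∈ f → False := by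
    intro e heM heP f hfP hfM v hve hvf
    have hfN : f ∈ N := by simpa [mem_symmDiff, hfM] using hP hfP
    have heN : e ∈ N := by
      by_contra heN
      exact heP (hclosed f hfP e (by simp [mem_symmDiff, heM, heN]) v hvf hve)
    exact hN e heN f hfN (by rintro rfl; exact hfM heM) v ⟨hve, hvf⟩
  intro e he f hf hne v ⟨hve, hvf⟩
  rw [mem_symmDiff] at he hf
  rcases he with ⟨heM, heP⟩ | ⟨heP, heM⟩ <;> rcases hf with ⟨hfM, hfP⟩ | ⟨hfP, hfM⟩
  · exact hM e heM f hfM hne v ⟨hve, hvf⟩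
  · exact mixed e heM heP f hfP hfM v hve hvf
  · exact mixed f hfM hfP e heP heM v hvf hve
  · have hN' : ∀ g ∈ P, g ∉ M → g ∈ N := fun g hg hgM => by
      simpa [mem_symmDiff, hgM] using hP hg
    exact hN e (hN' e heP heM) f (hN' f hfP hfM) hne v ⟨hve, hvf⟩

lemma two_mul_card_le [DecidableEq V] (hM : IsEdgeMatching M) (hdiag : ∀ e ∈ M, ¬ e.IsDiag)
    {W : Finset V} (hW : ∀ e ∈ M, ∀ v ∈ e, v ∈ W) : 2 * #M ≤ #W := by
  calc 2 * #M = ∑ e ∈ M, #e.toFinset := by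
        rw [sum_congr rfl fun e he => Sym2.card_toFinset_of_not_isDiag e (hdiag e he),
          sum_const, smul_eq_mul, mul_comm]
    _ = #(M.biUnion Sym2.toFinset) := by
        refine (card_biUnion fun e he f hf hne => ?_).symm
        simp only [Function.onFun, Finset.disjoint_left, Sym2.mem_toFinset]
        exact fun v hve hvf => hM e he f hf hne v ⟨hve, hvf⟩
    _ ≤ #W := card_le_card <| biUnion_subset.2 fun e he v hv => hW e he v (Sym2.mem_toFinset.1 hv)

end IsEdgeMatching

section Components

variable [Fintype V] [DecidableEq V] (S : Finset (Sym2 V))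

/-- An edge `e ∈ S` is filed under the component of its end `e.out.1`, which is also the
component of its other end. -/
noncomputable def componentEdges (c : (fromEdgeSet (S : Set (Sym2 V))).ConnectedComponent) :
    Finset (Sym2 V) :=
  {e ∈ S | e.out.1 ∈ c.supp}

variable {S}

lemma componentEdges_subset (c : (fromEdgeSet (S : Set (Sym2 V))).ConnectedComponent) :
    componentEdges S c ⊆ S :=
  filter_subset _ _

lemma mem_componentEdges_iff {c : (fromEdgeSet (S : Set (Sym2 V))).ConnectedComponent}
    {e : Sym2 V} (he : e ∈ S) {v : V} (hv : v ∈ e) : e ∈ componentEdges S c ↔ v ∈ c.supp := by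
  suffices h : (fromEdgeSet (S : Set (Sym2 V))).connectedComponentMk e.out.1 =
      (fromEdgeSet (S : Set (Sym2 V))).connectedComponentMk v by
    simp only [componentEdges, mem_filter, he, true_and, ConnectedComponent.mem_supp_iff, h]
  by_cases huv : e.out.1 = v
  · rw [huv]
  · refine ConnectedComponent.eq.2 (Adj.reachable ?_)
    rw [fromEdgeSet_adj, ← (Sym2.mem_and_mem_iff huv).1 ⟨e.out_fst_mem, hv⟩]
    exact ⟨he, huv⟩

lemma mem_componentEdges_of_mem_of_mem {c : (fromEdgeSet (S : Set (Sym2 V))).ConnectedComponent}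
    {e f : Sym2 V} (he : e ∈ componentEdges S c) (hf : f ∈ S) {v : V} (hve : v ∈ e)
    (hvf : v ∈ f) : f ∈ componentEdges S c :=
  (mem_componentEdges_iff hf hvf).2
    ((mem_componentEdges_iff (componentEdges_subset c he) hve).1 he)

lemma disjoint_componentEdges {c c' : (fromEdgeSet (S : Set (Sym2 V))).ConnectedComponent}
    (h : c ≠ c') : Disjoint (componentEdges S c) (componentEdges S c') := by
  refine disjoint_filter_filter' _ _ fun p hc hc' e he => h ?_
  rw [← (ConnectedComponent.mem_supp_iff c _).1 (hc e he),
    ← (ConnectedComponent.mem_supp_iff c' _).1 (hc' e he)]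

lemma sum_card_componentEdges_inter (X : Finset (Sym2 V)) :
    ∑ c, #(componentEdges S c ∩ X) = #(S ∩ X) := by
  classical
  rw [card_eq_sum_card_fiberwise
    (f := fun e => (fromEdgeSet (S : Set (Sym2 V))).connectedComponentMk e.out.1)
    (t := univ) fun _ _ => mem_coe.2 (mem_univ _)]
  simp only [componentEdges, filter_inter, ConnectedComponent.mem_supp_iff]

lemma card_supp_le_card_componentEdges_add_one
    (c : (fromEdgeSet (S : Set (Sym2 V))).ConnectedComponent) :
    #c.supp.toFinset ≤ #(componentEdges S c) + 1 := by
  rw [← Nat.card_eq_card_toFinset]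
  refine c.connected_toSimpleGraph.card_vert_le_card_edgeSet_add_one.trans ?_
  have hmaps : ∀ e ∈ c.toSimpleGraph.edgeSet, e.map Subtype.val ∈ componentEdges S c := by
    intro e he
    induction e using Sym2.ind with
    | _ u w =>
      have hadj : (fromEdgeSet (S : Set (Sym2 V))).Adj u w := he
      exact (mem_componentEdges_iff ((fromEdgeSet_adj _).1 hadj).1 (Sym2.mem_mk_left _ _)).2 u.2
  have hinj : Function.Injective fun e : c.toSimpleGraph.edgeSet =>
      (⟨e.1.map Subtype.val, hmaps e.1 e.2⟩ : componentEdges S c) := fun e f hef =>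
    Subtype.ext (Sym2.map.injective Subtype.val_injective (congrArg Subtype.val hef))
  simpa [Nat.card_eq_finsetCard] using Nat.card_le_card_of_injective _ hinj

end Components

section Switching

variable [Fintype V] [DecidableEq V]

lemma card_componentEdges_inter_le {A B : Finset (Sym2 V)} (hB : IsEdgeMatching B)
    (hBdiag : ∀ e ∈ B, ¬ e.IsDiag)
    (c : (fromEdgeSet ((A ∆ B : Finset (Sym2 V)) : Set (Sym2 V))).ConnectedComponent) :
    #(componentEdges (A ∆ B) c ∩ B) ≤ #(componentEdges (A ∆ B) c ∩ A) + 1 := by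
  have hcB : 2 * #(componentEdges (A ∆ B) c ∩ B) ≤ #c.supp.toFinset :=
    (hB.subset inter_subset_right).two_mul_card_le (fun e he => hBdiag e (mem_inter.1 he).2)
      fun e he v hv => by
        rw [Set.mem_toFinset,
          ← mem_componentEdges_iff (componentEdges_subset c (mem_inter.1 he).1) hv]
        exact (mem_inter.1 he).1
  have := card_supp_le_card_componentEdges_add_one c
  have := card_eq_card_inter_add_card_inter_of_subset_symmDiff (componentEdges_subset c)
  omega

noncomputable def componentSurplus (S C D : Finset (Sym2 V))
    (i : Fin (Fintype.card (fromEdgeSet (S : Set (Sym2 V))).ConnectedComponent)) : ℤ :=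
  #(componentEdges S ((Fintype.equivFin _).symm i) ∩ D) -
    #(componentEdges S ((Fintype.equivFin _).symm i) ∩ C)

lemma sum_componentSurplus (A B : Finset (Sym2 V)) :
    ∑ i, componentSurplus (A ∆ B) A B i = #B - #A := by
  simp only [componentSurplus, sum_sub_distrib]
  rw [Equiv.sum_comp (Fintype.equivFin _).symm (fun c => (#(componentEdges (A ∆ B) c ∩ B) : ℤ)),
    Equiv.sum_comp (Fintype.equivFin _).symm (fun c => (#(componentEdges (A ∆ B) c ∩ A) : ℤ))]
  have hB : (A ∆ B) ∩ B = B \ A := by ext; simp only [mem_inter, mem_symmDiff, mem_sdiff]; tauto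
  have hA : (A ∆ B) ∩ A = A \ B := by ext; simp only [mem_inter, mem_symmDiff, mem_sdiff]; tauto
  simp only [← Nat.cast_sum, sum_card_componentEdges_inter, hA, hB]
  have := card_sdiff_add_card_inter A B
  have := card_sdiff_add_card_inter B A
  rw [inter_comm] at this
  omega

def IsCanonicalSwitch (S C D P : Finset (Sym2 V)) : Prop :=
  ∃ i, P = componentEdges S ((Fintype.equivFin _).symm i) ∧
    IsLeast (Fin.prefixSumArgmin (componentSurplus S C D)) (i + 1)

lemma IsCanonicalSwitch.eq {S C D P P' : Finset (Sym2 V)} (h : IsCanonicalSwitch S C D P)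
    (h' : IsCanonicalSwitch S C D P') : P = P' := by
  obtain ⟨i, rfl, hi⟩ := h
  obtain ⟨i', rfl, hi'⟩ := h'
  rw [Fin.ext (Nat.add_right_cancel (hi.unique hi'))]

theorem exists_isCanonicalSwitch {A B : Finset (Sym2 V)} (hA : IsEdgeMatching A)
    (hB : IsEdgeMatching B) (hBdiag : ∀ e ∈ B, ¬ e.IsDiag) (hcard : #A + 2 = #B) :
    ∃ P ⊆ A ∆ B, IsEdgeMatching (A ∆ P) ∧ IsEdgeMatching (B ∆ P) ∧
      #(A ∆ P) = #A + 1 ∧ #(B ∆ P) + 1 = #B ∧ IsCanonicalSwitch (A ∆ B) (A ∆ P) (B ∆ P) P := by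
  have hle (i) : componentSurplus (A ∆ B) A B i ≤ 1 := by
    have := card_componentEdges_inter_le hB hBdiag ((Fintype.equivFin _).symm i)
    rw [componentSurplus]
    omega
  have hsum : ∑ i, componentSurplus (A ∆ B) A B i = 2 := by
    rw [sum_componentSurplus]
    omega
  obtain ⟨j, hj, hrecover⟩ := Fin.exists_flip_isLeast_argmin hle hsum
  rw [componentSurplus] at hj
  set P := componentEdges (A ∆ B) ((Fintype.equivFin _).symm j)
  have hPAB : P ⊆ A ∆ B := componentEdges_subset _
  have hPBA : P ⊆ B ∆ A := symmDiff_comm A B ▸ hPAB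
  have hclosed : ∀ e ∈ P, ∀ f ∈ A ∆ B, ∀ v, v ∈ e → v ∈ f → f ∈ P :=
    fun e he f hf v hve hvf => mem_componentEdges_of_mem_of_mem he hf hve hvf
  have hPB : #(P ∩ B) = #(P ∩ A) + 1 := by omega
  refine ⟨P, hPAB, hA.symmDiff_of_closed hB hPAB hclosed,
    hB.symmDiff_of_closed hA hPBA (symmDiff_comm A B ▸ hclosed), ?_, ?_, j, rfl, ?_⟩
  · have := card_symmDiff_add_two_mul_card_inter A P
    have := card_eq_card_inter_add_card_inter_of_subset_symmDiff hPAB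
    rw [inter_comm A P] at *
    omega
  · have := card_symmDiff_add_two_mul_card_inter B P
    have := card_eq_card_inter_add_card_inter_of_subset_symmDiff hPAB
    rw [inter_comm B P] at *
    omega
  · refine hrecover _ ?_ fun i hij => ?_
    · rw [componentSurplus, inter_symmDiff_self_of_subset_symmDiff hPAB,
        inter_symmDiff_self_of_subset_symmDiff hPBA]
      omega
    · have hdisj := disjoint_componentEdges ((Fintype.equivFin _).symm.injective.ne hij)
      rw [componentSurplus, componentSurplus, inter_symmDiff_of_disjoint hdisj,
        inter_symmDiff_of_disjoint hdisj]

end Switching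

open scoped Classical in
noncomputable def SimpleGraph.edgeMatchings [Fintype V] (G : SimpleGraph V) (k : ℕ) :
    Finset (Finset (Sym2 V)) :=
  {M ∈ G.edgeFinset.powerset | #M = k ∧ IsEdgeMatching M}

lemma SimpleGraph.mem_edgeMatchings [Fintype V] {G : SimpleGraph V} {k : ℕ}
    {M : Finset (Sym2 V)} :
    M ∈ G.edgeMatchings k ↔ (M : Set (Sym2 V)) ⊆ G.edgeSet ∧ #M = k ∧ IsEdgeMatching M := by
  simp [edgeMatchings, ← coe_subset]

lemma matchingCount_eq_card_edgeMatchings {V : Type} [Fintype V] (G : SimpleGraph V) (k : ℕ) :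
    matchingCount V G k = #(G.edgeMatchings k) := by
  unfold matchingCount SimpleGraph.edgeMatchings
  congr

theorem SimpleGraph.card_edgeMatchings_mul_le_sq [Fintype V] (G : SimpleGraph V) (k : ℕ) :
    #(G.edgeMatchings k) * #(G.edgeMatchings (k + 2)) ≤ #(G.edgeMatchings (k + 1)) ^ 2 := by
  classical
  have hswitch (p : Finset (Sym2 V) × Finset (Sym2 V))
      (hp : p ∈ G.edgeMatchings k ×ˢ G.edgeMatchings (k + 2)) :
      ∃ P ⊆ p.1 ∆ p.2, IsEdgeMatching (p.1 ∆ P) ∧ IsEdgeMatching (p.2 ∆ P) ∧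
        #(p.1 ∆ P) = #p.1 + 1 ∧ #(p.2 ∆ P) + 1 = #p.2 ∧
        IsCanonicalSwitch (p.1 ∆ p.2) (p.1 ∆ P) (p.2 ∆ P) P := by
    obtain ⟨⟨-, hkA, hA⟩, ⟨hBG, hkB, hB⟩⟩ := And.imp mem_edgeMatchings.1 mem_edgeMatchings.1
      (mem_product.1 hp)
    exact exists_isCanonicalSwitch hA hB (fun e he => G.not_isDiag_of_mem_edgeSet (hBG he))
      (by omega)
  choose! P hPsub hPA hPB hcardA hcardB hcan using hswitch
  rw [sq, ← card_product, ← card_product]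
  refine card_le_card_of_injOn (fun p => (p.1 ∆ P p, p.2 ∆ P p)) (fun p hp => ?_)
    fun p hp q hq hpq => ?_
  · obtain ⟨⟨hAG, hA, -⟩, ⟨hBG, hB, -⟩⟩ := And.imp mem_edgeMatchings.1 mem_edgeMatchings.1
      (mem_product.1 hp)
    have := hcardA p hp
    have := hcardB p hp
    have hsub (X : Finset (Sym2 V)) (hX : X ⊆ p.1 ∪ p.2) :
        (↑(X ∆ P p) : Set (Sym2 V)) ⊆ G.edgeSet := by
      refine subset_trans ?_ (Set.union_subset hAG hBG)
      rw [← coe_union, coe_subset]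
      exact symmDiff_le_sup.trans (union_subset hX ((hPsub p hp).trans symmDiff_le_sup))
    simp only [mem_coe, mem_product, mem_edgeMatchings]
    exact ⟨⟨hsub _ subset_union_left, by omega, hPA p hp⟩,
      ⟨hsub _ subset_union_right, by omega, hPB p hp⟩⟩
  · have hS (x : Finset (Sym2 V) × Finset (Sym2 V)) : (x.1 ∆ P x) ∆ (x.2 ∆ P x) = x.1 ∆ x.2 := by
      rw [symmDiff_symmDiff_symmDiff_comm, symmDiff_self, symmDiff_bot]
    obtain ⟨h1, h2⟩ := Prod.mk.inj hpq
    have hP : P p = P q := (hcan p hp).eq (by rw [← hS p, h1, h2, hS q]; exact hcan q hq)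
    rw [hP] at h1 h2
    exact Prod.ext (symmDiff_left_injective _ h1) (symmDiff_left_injective _ h2)

/-- Heilmann–Lieb theorem: the matching numbers of a simple graph are
log-concave: `p(G,k)^2 ≥ p(G,k-1) * p(G,k+1)` for all `k ≥ 1`. -/
theorem matching_log_concave (V : Type) [Fintype V] (G : SimpleGraph V) (k : ℕ) (hk : 1 ≤ k) :
    matchingCount V G (k - 1) * matchingCount V G (k + 1) ≤ (matchingCount V G k) ^ 2 := by
  obtain ⟨j, rfl⟩ := Nat.exists_eq_add_of_le' hk
  simpa [matchingCount_eq_card_edgeMatchings] using G.card_edgeMatchings_mul_le_sq j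
end

section
/- Let A and B be hereditary collections of labeled graphs on the vertex set [n], meaning closed under taking spanning subgraphs (deleting edges). Then |A|·|B| ≤ 2^C(n,2) · |A ∩ B|. -/
/-! Edge deletion is inclusion of edge sets, and the edge sets of graphs on `Fin n` are exactly
the subsets of the `n.choose 2` non-diagonal pairs; so hereditary families are lower sets in a
powerset lattice, where the Harris–Kleitman inequality applies. -/

theorem IsLowerSet.card_mul_card_le_of_orderIso {α β : Type*} [Fintype α] [Preorder β]
    (e : β ≃o Finset α) {A B : Set β} (hA : IsLowerSet A) (hB : IsLowerSet B) :
    Nat.card A * Nat.card B ≤ 2 ^ Fintype.card α * Nat.card ↥(A ∩ B) := by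
  classical
  rw [← Nat.card_image_of_injective e.injective (A ∩ B), Set.image_inter e.injective,
    ← Nat.card_image_of_injective e.injective A, ← Nat.card_image_of_injective e.injective B]
  simpa only [Nat.card_eq_card_toFinset, Set.toFinset_inter] using
    IsLowerSet.le_card_inter_finset (𝒜 := (e '' A).toFinset) (ℬ := (e '' B).toFinset)
      (by simpa using hA.image e) (by simpa using hB.image e)

namespace SimpleGraph

variable {V : Type*}

def edgeSetOrderIso : SimpleGraph V ≃o Set {e : Sym2 V // ¬e.IsDiag} where
  toFun G := Subtype.val ⁻¹' G.edgeSet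
  invFun s := fromEdgeSet (Subtype.val '' s)
  left_inv G := by
    ext v w
    simpa using G.ne_of_adj
  right_inv s := by
    ext e
    simp [e.2]
  map_rel_iff' {G H} := by
    simp only [Equiv.coe_fn_mk, ← edgeSet_subset_edgeSet]
    exact ⟨fun h e he ↦ h (a := ⟨e, G.not_isDiag_of_mem_edgeSet he⟩) he, fun h _ he ↦ h he⟩

end SimpleGraph

/-- Kleitman's inequality: if `A` and `B` are hereditary collections of labeled
graphs on `[n]` (closed under deleting edges, i.e. under taking spanning
subgraphs), then `|A| * |B| ≤ 2^C(n,2) * |A ∩ B|`. -/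
theorem kleitman_inequality (n : ℕ) (A B : Set (SimpleGraph (Fin n)))
    (hA : ∀ G ∈ A, ∀ H : SimpleGraph (Fin n), H ≤ G → H ∈ A)
    (hB : ∀ G ∈ B, ∀ H : SimpleGraph (Fin n), H ≤ G → H ∈ B) :
    Nat.card A * Nat.card B ≤ 2 ^ n.choose 2 * Nat.card ↥(A ∩ B) := by
  have hcard : Fintype.card {e : Sym2 (Fin n) // ¬e.IsDiag} = n.choose 2 := by
    rw [Sym2.card_subtype_not_diag, Fintype.card_fin]
  rw [← hcard]
  exact IsLowerSet.card_mul_card_le_of_orderIso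
    (SimpleGraph.edgeSetOrderIso.trans Fintype.finsetOrderIsoSet.symm)
    (fun G H hHG hG ↦ hA G hG H hHG) (fun G H hHG hG ↦ hB G hG H hHG)
end

section
/- Let P = (X, ≺) be a finite poset with n elements, let e(P) be the number of linear extensions of P, and for x ∈ X let b(x) be the size of the upper order ideal {y : y ⪰ x}. Then e(P) · ∏_{x∈X} b(x) ≥ n!. -/
/-!
Induction on `|X|`. Every element lies above a minimal one, so `|X| ≤ ∑ b(m)` over the
minimal elements `m`. Prefixing a linear extension of `X ∖ {m}` by a minimal `m` gives a
linear extension of `X`, and these are distinct for distinct pairs, so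
`∑ e(X ∖ {m}) ≤ e(X)`. Removing a minimal `m` does not change the upper ideals of the other
elements, so `∏_X b = b(m) · ∏_{X ∖ {m}} b`. Hence
`|X|! ≤ ∑ b(m) · (|X| - 1)! ≤ ∑ b(m) · e(X ∖ {m}) · ∏_{X ∖ {m}} b`, and the right-hand side
equals `∑ e(X ∖ {m}) · ∏_X b ≤ e(X) · ∏_X b`.
-/

open Finset
open scoped Nat

abbrev FinLinearExtension (X : Type*) [Fintype X] [Preorder X] :=
  {ρ : X ≃ Fin (Fintype.card X) // StrictMono ρ}

section ConsFirst

variable {X : Type*} [Fintype X] [DecidableEq X]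

theorem Fintype.card_subtype_ne_add_one (m : X) :
    Fintype.card {y // y ≠ m} + 1 = Fintype.card X := by
  rw [← Fintype.card_option, Fintype.card_congr (Equiv.optionSubtypeNe m)]

/-- The enumeration of `X` that starts with `m` and continues with `ρ`. -/
def Equiv.consFirst (m : X) (ρ : {y // y ≠ m} ≃ Fin (Fintype.card {y // y ≠ m})) :
    X ≃ Fin (Fintype.card X) :=
  (Equiv.optionSubtypeNe m).symm.trans <| ρ.optionCongr.trans <|
    (finSuccEquiv _).symm.trans (finCongr (Fintype.card_subtype_ne_add_one m))

@[simp] theorem Equiv.consFirst_self (m : X)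
    (ρ : {y // y ≠ m} ≃ Fin (Fintype.card {y // y ≠ m})) :
    (Equiv.consFirst m ρ m : ℕ) = 0 := by
  simp [Equiv.consFirst]

theorem Equiv.consFirst_of_ne (m : X) (ρ : {y // y ≠ m} ≃ Fin (Fintype.card {y // y ≠ m}))
    {y : X} (hy : y ≠ m) : (Equiv.consFirst m ρ y : ℕ) = ρ ⟨y, hy⟩ + 1 := by
  simp [Equiv.consFirst, Equiv.optionSubtypeNe_symm_of_ne hy]

theorem Equiv.eq_of_consFirst_eq {m m' : X}
    {ρ : {y // y ≠ m} ≃ Fin (Fintype.card {y // y ≠ m})}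
    {ρ' : {y // y ≠ m'} ≃ Fin (Fintype.card {y // y ≠ m'})}
    (h : Equiv.consFirst m ρ = Equiv.consFirst m' ρ') : m = m' := by
  by_contra hne
  have := Equiv.consFirst_self m ρ
  rw [h, Equiv.consFirst_of_ne m' ρ' hne] at this
  omega

theorem Equiv.consFirst_injective (m : X) : Function.Injective (Equiv.consFirst m) := by
  intro ρ ρ' h
  ext ⟨y, hy⟩
  have := Equiv.consFirst_of_ne m ρ hy
  rw [h, Equiv.consFirst_of_ne m ρ' hy] at this
  omega

end ConsFirst

section Preorder

variable {X : Type*} [Fintype X] [Preorder X]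

theorem Equiv.strictMono_consFirst [DecidableEq X] {m : X} (hm : IsMin m)
    {ρ : {y // y ≠ m} ≃ Fin (Fintype.card {y // y ≠ m})} (hρ : StrictMono ρ) :
    StrictMono (Equiv.consFirst m ρ) := by
  intro x y hxy
  have hym : y ≠ m := by rintro rfl; exact hm.not_lt hxy
  rw [Fin.lt_def, Equiv.consFirst_of_ne m ρ hym]
  by_cases hxm : x = m
  · simp [hxm]
  · rw [Equiv.consFirst_of_ne m ρ hxm]
    exact Nat.succ_lt_succ (hρ (show (⟨x, hxm⟩ : {y // y ≠ m}) < ⟨y, hym⟩ from hxy))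

theorem sum_card_finLinearExtension_subtype_ne_le [DecidableEq X]
    [DecidablePred (IsMin : X → Prop)] :
    ∑ m : {m : X // IsMin m}, Nat.card (FinLinearExtension {y // y ≠ m.1}) ≤
      Nat.card (FinLinearExtension X) := by
  rw [← Nat.card_sigma]
  refine Nat.card_le_card_of_injective
    (fun p => ⟨Equiv.consFirst p.1.1 p.2.1, Equiv.strictMono_consFirst p.1.2 p.2.2⟩) ?_
  rintro ⟨⟨m, hm⟩, ρ, hρ⟩ ⟨⟨m', hm'⟩, ρ', hρ'⟩ h
  have h' : Equiv.consFirst m ρ = Equiv.consFirst m' ρ' := congrArg Subtype.val h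
  obtain rfl := Equiv.eq_of_consFirst_eq h'
  obtain rfl := Equiv.consFirst_injective m h'
  rfl

theorem card_le_sum_card_Ici_isMin [DecidablePred (IsMin : X → Prop)] :
    Fintype.card X ≤ ∑ m : {m : X // IsMin m}, Nat.card {y // m.1 ≤ y} := by
  classical
  have hcover :
      (univ : Finset X) ⊆ univ.biUnion fun m : {m : X // IsMin m} => {y | m.1 ≤ y} := by
    intro y _
    obtain ⟨m, hmy, hm⟩ := exists_minimal_le_of_wellFoundedLT (fun _ => True) y trivial
    simpa using ⟨m, minimal_true.mp hm, hmy⟩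
  calc Fintype.card X = #univ := card_univ.symm
    _ ≤ #(univ.biUnion fun m : {m : X // IsMin m} => {y | m.1 ≤ y}) := card_le_card hcover
    _ ≤ ∑ m : {m : X // IsMin m}, #{y | m.1 ≤ y} := card_biUnion_le
    _ = ∑ m : {m : X // IsMin m}, Nat.card {y // m.1 ≤ y} := by
      simp [Nat.card_eq_fintype_card, Fintype.card_subtype]

end Preorder

section PartialOrder

variable {X : Type*} [PartialOrder X]

theorem card_Ici_subtype_ne {m : X} (hm : IsMin m) (x : {y // y ≠ m}) :
    Nat.card {y : {y // y ≠ m} // x ≤ y} = Nat.card {y // x.1 ≤ y} :=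
  Nat.card_congr <| Equiv.subtypeSubtypeEquivSubtype fun {y} hxy hym =>
    x.2 (le_antisymm (hym ▸ hxy) (hm (hym ▸ hxy)))

theorem prod_card_Ici_eq_mul_prod_subtype_ne [Fintype X] [DecidableEq X] {m : X}
    (hm : IsMin m) :
    ∏ x : X, Nat.card {y // x ≤ y} =
      Nat.card {y // m ≤ y} *
        ∏ x : {y // y ≠ m}, Nat.card {y : {y // y ≠ m} // x ≤ y} := by
  simp only [Fintype.prod_eq_mul_prod_subtype_ne _ m, card_Ici_subtype_ne hm]

end PartialOrder

/-- Björner–Wachs inequality: for a finite poset `P` on `n` elements,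
`e(P) * ∏_x b(x) ≥ n!`, where `e(P)` is the number of linear extensions of `P`
and `b(x)` is the size of the upper order ideal `{y : y ≥ x}`. -/
theorem bjorner_wachs (X : Type) [Fintype X] [PartialOrder X] :
    Nat.factorial (Fintype.card X) ≤
      Nat.card {ρ : X ≃ Fin (Fintype.card X) // ∀ x y : X, x < y → ρ x < ρ y} *
        ∏ x : X, Nat.card {y : X // x ≤ y} := by
  classical
  obtain ⟨n, hn⟩ : ∃ n, Fintype.card X = n := ⟨_, rfl⟩
  induction n generalizing X with
  | zero =>
    have := Fintype.card_eq_zero_iff.mp hn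
    have : Nonempty (FinLinearExtension X) := ⟨Fintype.equivFin X, isEmptyElim⟩
    have hfac : (Fintype.card X)! = 1 := by rw [hn, Nat.factorial_zero]
    rw [hfac, univ_eq_empty, prod_empty, mul_one]
    exact Nat.card_pos (α := FinLinearExtension X)
  | succ n ih =>
    have hcard (m : X) : Fintype.card {y // y ≠ m} = n := by
      have := Fintype.card_subtype_ne_add_one m; omega
    let b (x : X) := Nat.card {y // x ≤ y}
    calc (Fintype.card X)! = (n + 1) * n ! := by rw [hn, Nat.factorial_succ]
      _ ≤ (∑ m : {m : X // IsMin m}, b m) * n ! := by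
        gcongr; exact hn ▸ card_le_sum_card_Ici_isMin
      _ = ∑ m : {m : X // IsMin m}, b m * n ! := sum_mul ..
      _ ≤ ∑ m : {m : X // IsMin m}, b m * (Nat.card (FinLinearExtension {y // y ≠ m.1}) *
            ∏ x : {y // y ≠ m.1}, Nat.card {y : {y // y ≠ m.1} // x ≤ y}) := by
        gcongr with m; exact hcard m ▸ ih _ (hcard m)
      _ = (∑ m : {m : X // IsMin m}, Nat.card (FinLinearExtension {y // y ≠ m.1})) *
            ∏ x, b x := by
        rw [sum_mul]
        refine sum_congr rfl fun m _ => ?_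
        rw [prod_card_Ici_eq_mul_prod_subtype_ne m.2]
        ring
      _ ≤ Nat.card (FinLinearExtension X) * ∏ x, b x := by
        gcongr; exact sum_card_finLinearExtension_subtype_ne_le
end

section
/- Let P = (X,≺) and Q = (X,≺′) be two partial orders on the same n-element set X such that every chain of P and every chain of Q intersect in at most one element. Then e(P)·e(Q) ≥ n!, where e denotes the number of linear extensions. -/
/-!
An enumeration `a₁, …, aₙ` of `X` is sorted into a linear extension of `P` by inserting
`aₙ, …, a₁` one at a time by bumping: `x` goes just before the first `y` with `x < y`, and `y`
is then inserted into the rest of the list in the same way. Doing this for `P` and for `Q`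
maps the `n!` enumerations to pairs of linear extensions, injectively: the element inserted
last always lies on the greedy chain read off the result from its right end, so it lies in a
`P`-chain and a `Q`-chain determined by the pair, which by hypothesis share only that element;
and once the inserted element is known, a bump insertion can be undone.
-/

open scoped Classical

namespace PartialOrder

variable {X : Type*} (P : PartialOrder X) {a b c : X}

protected theorem lt_trans (hab : P.lt a b) (hbc : P.lt b c) : P.lt a c :=
  @lt_trans X P.toPreorder a b c hab hbc

protected theorem lt_asymm (hab : P.lt a b) : ¬ P.lt b a :=
  @lt_asymm X P.toPreorder a b hab

protected theorem lt_irrefl (a : X) : ¬ P.lt a a :=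
  @lt_irrefl X P.toPreorder a

protected theorem le_of_lt (hab : P.lt a b) : P.le a b :=
  @le_of_lt X P.toPreorder a b hab

end PartialOrder

namespace Sidorenko

variable {X : Type*} (P : PartialOrder X)

def Compatible (l : List X) : Prop :=
  l.Pairwise fun a b => ¬ P.lt b a

noncomputable def bump (x : X) : List X → List X
  | [] => [x]
  | y :: t => if P.lt x y then x :: bump y t else y :: bump x t

theorem bump_perm : ∀ (x : X) (l : List X), (bump P x l).Perm (x :: l)
  | _, [] => .refl _
  | x, y :: t => by
    rw [bump]
    split_ifs
    · exact (bump_perm y t).cons x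
    · exact ((bump_perm x t).cons y).trans (.swap x y t)

theorem length_bump (x : X) (l : List X) : (bump P x l).length = l.length + 1 :=
  (bump_perm P x l).length_eq

theorem mem_bump {x a : X} {l : List X} : a ∈ bump P x l ↔ a = x ∨ a ∈ l := by
  rw [(bump_perm P x l).mem_iff, List.mem_cons]

theorem compatible_bump : ∀ (x : X) {l : List X}, Compatible P l → Compatible P (bump P x l)
  | x, [], _ => List.pairwise_singleton _ x
  | x, y :: t, hl => by
    obtain ⟨hy, ht⟩ := List.pairwise_cons.1 hl
    rw [bump]
    split_ifs with hxy
    · refine List.pairwise_cons.2 ⟨fun z hz => ?_, compatible_bump y ht⟩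
      rcases (mem_bump P).1 hz with rfl | hz
      · exact P.lt_asymm hxy
      · exact fun hzx => hy z hz (P.lt_trans hzx hxy)
    · refine List.pairwise_cons.2 ⟨fun z hz => ?_, compatible_bump x ht⟩
      rcases (mem_bump P).1 hz with rfl | hz
      exacts [hxy, hy z hz]

/-- The greedy chain from the right end of `l`: repeatedly step left to the nearest element
strictly below the current one. -/
noncomputable def trail : List X → List X
  | [] => []
  | y :: t => if ∀ c ∈ (trail t).head?, P.lt y c then y :: trail t else trail t

theorem pairwise_trail : ∀ l : List X, (trail P l).Pairwise P.lt
  | [] => .nil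
  | y :: t => by
    have ih := pairwise_trail t
    rw [trail]
    split_ifs with hy
    · refine List.pairwise_cons.2 ⟨fun c hc => ?_, ih⟩
      generalize trail P t = T at hy hc ih
      cases T with
      | nil => cases hc
      | cons c₀ cs =>
        have hyc₀ : P.lt y c₀ := hy c₀ rfl
        rcases List.mem_cons.1 hc with rfl | hc
        exacts [hyc₀, P.lt_trans hyc₀ (List.rel_of_pairwise_cons ih hc)]
    · exact ih

theorem isChain_trail (l : List X) : IsChain P.le {a | a ∈ trail P l} := by
  have : Std.Symm fun a b => P.le a b ∨ P.le b a := ⟨fun _ _ => Or.symm⟩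
  exact ((pairwise_trail P l).imp fun h => Or.inl (P.le_of_lt h)).set_pairwise

theorem trail_subset_trail_cons (y : X) (t : List X) : trail P t ⊆ trail P (y :: t) := by
  rw [trail]
  split_ifs
  exacts [List.subset_cons_self y _, List.Subset.refl _]

theorem head?_trail_bump : ∀ (x : X) {l : List X}, Compatible P l → (∀ z ∈ l, ¬ P.lt z x) →
    (trail P (bump P x l)).head? = some x
  | x, [], _, _ => by simp [bump, trail]
  | x, y :: t, hl, hx => by
    obtain ⟨hy, ht⟩ := List.pairwise_cons.1 hl
    rw [bump]
    split_ifs with hxy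
    · rw [trail, head?_trail_bump y ht hy, if_pos (by simpa using hxy), List.head?_cons]
    · have ih := head?_trail_bump x ht fun z hz => hx z (List.mem_cons_of_mem y hz)
      rw [trail, ih, if_neg (by simpa using hx y List.mem_cons_self), ih]

theorem mem_trail_bump : ∀ (x : X) {l : List X}, Compatible P l → x ∈ trail P (bump P x l)
  | x, [], _ => by simp [bump, trail]
  | x, y :: t, hl => by
    obtain ⟨hy, ht⟩ := List.pairwise_cons.1 hl
    rw [bump]
    split_ifs with hxy
    · rw [trail, head?_trail_bump P y ht hy, if_pos (by simpa using hxy)]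
      exact List.mem_cons_self
    · exact trail_subset_trail_cons P y _ (mem_trail_bump x ht)

theorem bump_injective : ∀ {x : X} {l₁ l₂ : List X}, Compatible P l₁ → Compatible P l₂ →
    (x :: l₁).Nodup → (x :: l₂).Nodup → bump P x l₁ = bump P x l₂ → l₁ = l₂
  | _, [], [], _, _, _, _, _ => rfl
  | x, [], _ :: _, _, _, _, _, heq | x, _ :: _, [], _, _, _, _, heq => by
    simpa [length_bump] using congrArg List.length heq
  | x, y₁ :: t₁, y₂ :: t₂, hl₁, hl₂, hn₁, hn₂, heq => by
    obtain ⟨hy₁, ht₁⟩ := List.pairwise_cons.1 hl₁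
    obtain ⟨hy₂, ht₂⟩ := List.pairwise_cons.1 hl₂
    rw [bump, bump] at heq
    split_ifs at heq with hxy₁ hxy₂ hxy₂ <;> simp only [List.cons.injEq] at heq
    -- both bumped elements are the head of the trail of the common tail
    · obtain rfl : y₁ = y₂ := Option.some_inj.1 <| by
        rw [← head?_trail_bump P y₁ ht₁ hy₁, heq.2, head?_trail_bump P y₂ ht₂ hy₂]
      rw [bump_injective ht₁ ht₂ (List.nodup_cons.1 hn₁).2 (List.nodup_cons.1 hn₂).2 heq.2]
    · exact absurd (heq.1 ▸ List.mem_cons_self) (List.nodup_cons.1 hn₂).1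
    · exact absurd (heq.1 ▸ List.mem_cons_self) (List.nodup_cons.1 hn₁).1
    · obtain ⟨rfl, htl⟩ := heq
      rw [bump_injective ht₁ ht₂ (hn₁.sublist ((List.sublist_cons_self y₁ t₁).cons_cons x))
        (hn₂.sublist ((List.sublist_cons_self y₁ t₂).cons_cons x)) htl]

noncomputable def bumpSort : List X → List X
  | [] => []
  | a :: m => bump P a (bumpSort m)

theorem bumpSort_perm : ∀ m : List X, (bumpSort P m).Perm m
  | [] => .nil
  | a :: m => (bump_perm P a _).trans ((bumpSort_perm m).cons a)

theorem compatible_bumpSort : ∀ m : List X, Compatible P (bumpSort P m)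
  | [] => .nil
  | a :: m => compatible_bump P a (compatible_bumpSort m)

theorem bumpSort_injective (Q : PartialOrder X)
    (h : ∀ C C' : Set X, IsChain P.le C → IsChain Q.le C' → (C ∩ C').Subsingleton) :
    ∀ {m₁ m₂ : List X}, m₁.Nodup → m₂.Nodup →
      bumpSort P m₁ = bumpSort P m₂ → bumpSort Q m₁ = bumpSort Q m₂ → m₁ = m₂
  | [], [], _, _, _, _ => rfl
  | [], _ :: _, _, _, hP, _ | _ :: _, [], _, _, hP, _ => by
    simpa [bumpSort, length_bump] using congrArg List.length hP
  | a₁ :: m₁, a₂ :: m₂, hn₁, hn₂, hP, hQ => by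
    obtain rfl : a₁ = a₂ := by
      have hmem (R : PartialOrder X) (a : X) (m : List X) : a ∈ trail R (bumpSort R (a :: m)) :=
        mem_trail_bump R a (compatible_bumpSort R m)
      refine h _ _ (isChain_trail P _) (isChain_trail Q _) ?_ ⟨hmem P a₂ m₂, hmem Q a₂ m₂⟩
      exact ⟨hP ▸ hmem P a₁ m₁, hQ ▸ hmem Q a₁ m₁⟩
    have bumpSort_cancel (R : PartialOrder X) (hR : bumpSort R (a₁ :: m₁) = bumpSort R (a₁ :: m₂)) :
        bumpSort R m₁ = bumpSort R m₂ :=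
      bump_injective R (compatible_bumpSort R m₁) (compatible_bumpSort R m₂)
        (((bumpSort_perm R m₁).cons a₁).nodup_iff.2 hn₁)
        (((bumpSort_perm R m₂).cons a₁).nodup_iff.2 hn₂) hR
    rw [bumpSort_injective Q h (List.nodup_cons.1 hn₁).2 (List.nodup_cons.1 hn₂).2
      (bumpSort_cancel P hP) (bumpSort_cancel Q hQ)]

section Numbering

variable {n : ℕ}

theorem lt_of_compatible_ofFn (e : X ≃ Fin n) (hc : Compatible P (List.ofFn e.symm)) {x y : X}
    (hxy : P.lt x y) : e x < e y := by
  by_contra hle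
  have hne : e y ≠ e x := fun hyx => P.lt_irrefl x (e.injective hyx ▸ hxy)
  exact List.pairwise_ofFn.1 hc (lt_of_le_of_ne (not_lt.1 hle) hne) (by simpa using hxy)

noncomputable def equivFinOfPerm (ρ : X ≃ Fin n) (l : List X) (hl : l.Perm (List.ofFn ρ.symm)) :
    X ≃ Fin n :=
  ((hl.nodup_iff.2 (List.nodup_ofFn.2 ρ.symm.injective)).getEquivOfForallMemList l
    fun x => hl.mem_iff.2 (List.mem_ofFn.2 ⟨ρ x, ρ.symm_apply_apply x⟩)).symm.trans
    (finCongr (hl.length_eq.trans List.length_ofFn))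

theorem ofFn_symm_equivFinOfPerm (ρ : X ≃ Fin n) (l : List X) (hl : l.Perm (List.ofFn ρ.symm)) :
    List.ofFn (equivFinOfPerm ρ l hl).symm = l := by
  refine List.ext_get (by simpa using hl.length_eq.symm) fun _ _ _ => ?_
  simp [equivFinOfPerm]

noncomputable def linearExtension (ρ : X ≃ Fin n) :
    {σ : X ≃ Fin n // ∀ x y : X, P.lt x y → σ x < σ y} :=
  ⟨equivFinOfPerm ρ _ (bumpSort_perm P (List.ofFn ρ.symm)), fun _ _ =>
    lt_of_compatible_ofFn P _ <| by
      rw [ofFn_symm_equivFinOfPerm]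
      exact compatible_bumpSort P _⟩

theorem ofFn_symm_linearExtension (ρ : X ≃ Fin n) :
    List.ofFn (linearExtension P ρ).1.symm = bumpSort P (List.ofFn ρ.symm) :=
  ofFn_symm_equivFinOfPerm ρ _ (bumpSort_perm P _)

theorem linearExtension_prod_injective (Q : PartialOrder X)
    (h : ∀ C C' : Set X, IsChain P.le C → IsChain Q.le C' → (C ∩ C').Subsingleton) :
    Function.Injective fun ρ : X ≃ Fin n => (linearExtension P ρ, linearExtension Q ρ) := by
  intro ρ σ hρσ
  have hofFn (R : PartialOrder X) (hR : linearExtension R ρ = linearExtension R σ) :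
      bumpSort R (List.ofFn ρ.symm) = bumpSort R (List.ofFn σ.symm) := by
    rw [← ofFn_symm_linearExtension, hR, ofFn_symm_linearExtension]
  have nodup (τ : X ≃ Fin n) : (List.ofFn τ.symm).Nodup := List.nodup_ofFn.2 τ.symm.injective
  have henum : List.ofFn ρ.symm = List.ofFn σ.symm :=
    bumpSort_injective P Q h (nodup ρ) (nodup σ) (hofFn P (congrArg Prod.fst hρσ))
      (hofFn Q (congrArg Prod.snd hρσ))
  exact Equiv.symm_bijective.injective (DFunLike.coe_injective (List.ofFn_injective henum))

end Numbering

end Sidorenko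

open Sidorenko in
/-- Sidorenko's inequality: if `P` and `Q` are two partial orders on the same
finite set `X` such that every chain of `P` and every chain of `Q` intersect
in at most one element, then `e(P) * e(Q) ≥ n!`, where `e` counts linear
extensions. -/
theorem sidorenko_inequality (X : Type) [Fintype X] (P Q : PartialOrder X)
    (h : ∀ C C' : Set X, IsChain P.le C → IsChain Q.le C' → (C ∩ C').Subsingleton) :
    Nat.factorial (Fintype.card X) ≤
      Nat.card {ρ : X ≃ Fin (Fintype.card X) // ∀ x y : X, P.lt x y → ρ x < ρ y} *
      Nat.card {ρ : X ≃ Fin (Fintype.card X) // ∀ x y : X, Q.lt x y → ρ x < ρ y} := by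
  calc Nat.factorial (Fintype.card X)
      = Nat.card (X ≃ Fin (Fintype.card X)) := by
        rw [Nat.card_eq_fintype_card, Fintype.card_equiv (Fintype.equivFin X)]
    _ ≤ _ := Nat.card_le_card_of_injective _ (linearExtension_prod_injective P Q h)
    _ = _ := Nat.card_prod _ _
end

section
/- The sum over all partitions λ of n of the square of the number of standard Young tableaux of shape λ equals n!: ∑_{λ⊢n} (f^λ)^2 = n!. -/
/-!
Young's lattice is a differential poset. A diagram has exactly one more addable cell than
removable cells (the corner ending row `i` matches the addable cell ending row `i + 1`), so it
has one more upper cover than lower covers; and since the lattice is modular, two distinct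
diagrams have a common upper cover iff they have a common lower cover. Together: `D U = U D + I`
for the operators `U`, `D` summing over upper and lower covers.

Removing the cell of the largest entry gives the branching rule `f^λ = ∑_{μ ⋖ λ} f^μ`. Feeding it
into `D U = U D + I` and inducting on `|μ|` gives `∑_{λ ⋗ μ} f^λ = (|μ| + 1) f^μ`, and double
counting the pairs `μ ⋖ λ` with `|λ| = n + 1` then gives
`∑_{|λ| = n + 1} (f^λ)^2 = (n + 1) ∑_{|μ| = n} (f^μ)^2`.
-/

/-- The number of standard Young tableaux of shape `μ`: bijective fillings of the
cells of `μ` by `0, …, n-1` that strictly increase along rows and columns. -/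
noncomputable def sytCard (μ : YoungDiagram) : ℕ :=
  Nat.card {T : {c : ℕ × ℕ // c ∈ μ} ≃ Fin μ.card //
    ∀ c d : {c : ℕ × ℕ // c ∈ μ},
      ((c.1.1 = d.1.1 ∧ c.1.2 < d.1.2) ∨ (c.1.2 = d.1.2 ∧ c.1.1 < d.1.1)) → T c < T d}

open scoped Finset

theorem ncard_setOf_covBy_covBy_eq {α : Type*} [Lattice α] [IsModularLattice α] {a b : α}
    (hab : a ≠ b) : {c | a ⋖ c ∧ b ⋖ c}.ncard = {c | c ⋖ a ∧ c ⋖ b}.ncard := by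
  refine Set.ncard_congr (fun _ _ => a ⊓ b) (fun c ⟨hac, hbc⟩ => ?_)
    (fun c c' ⟨hac, hbc⟩ ⟨hac', hbc'⟩ _ =>
      (hac.wcovBy.sup_eq hbc.wcovBy hab).symm.trans (hac'.wcovBy.sup_eq hbc'.wcovBy hab))
    (fun d ⟨hda, hdb⟩ => ?_)
  · obtain rfl := hac.wcovBy.sup_eq hbc.wcovBy hab
    exact ⟨inf_covBy_of_covBy_sup_right hbc, inf_covBy_of_covBy_sup_left hac⟩
  · have hinf := hda.wcovBy.inf_eq hdb.wcovBy hab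
    rw [← hinf] at hda hdb
    exact ⟨a ⊔ b, ⟨covBy_sup_of_inf_covBy_right hdb, covBy_sup_of_inf_covBy_left hda⟩, hinf⟩

namespace YoungDiagram

variable {μ ν : YoungDiagram} {c : ℕ × ℕ}

instance : DecidableEq YoungDiagram :=
  fun _ _ => decidable_of_iff _ YoungDiagram.ext_iff.symm

def cellsEmbedding : YoungDiagram ↪o Finset (ℕ × ℕ) :=
  OrderEmbedding.ofMapLEIff cells fun _ _ => cells_subset_iff

def erase (μ : YoungDiagram) (c : ℕ × ℕ) (hc : Maximal (· ∈ μ) c) : YoungDiagram where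
  cells := μ.cells.erase c
  isLowerSet x y hxy hy := by
    simp only [Finset.coe_erase, Set.mem_sdiff, Finset.mem_coe, mem_cells,
      Set.mem_singleton_iff] at hy ⊢
    exact ⟨μ.isLowerSet hxy hy.1, fun hxc => hy.2 (hc.eq_of_ge hy.1 (hxc ▸ hxy))⟩

def insert (μ : YoungDiagram) (c : ℕ × ℕ) (hc : Minimal (· ∉ μ) c) : YoungDiagram where
  cells := μ.cells.cons c hc.1
  isLowerSet x y hxy hy := by
    simp only [Finset.coe_cons, Set.mem_insert_iff, Finset.mem_coe, mem_cells] at hy ⊢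
    rcases hy with rfl | hy
    · by_contra! hx
      exact hx.1 (hc.eq_of_le hx.2 hxy ▸ rfl)
    · exact Or.inr (μ.isLowerSet hxy hy)

@[simp] theorem mem_erase {hc : Maximal (· ∈ μ) c} {x : ℕ × ℕ} :
    x ∈ μ.erase c hc ↔ x ≠ c ∧ x ∈ μ :=
  Finset.mem_erase

@[simp] theorem mem_insert {hc : Minimal (· ∉ μ) c} {x : ℕ × ℕ} :
    x ∈ μ.insert c hc ↔ x = c ∨ x ∈ μ :=
  Finset.mem_cons (h := hc.1)

theorem erase_covBy (hc : Maximal (· ∈ μ) c) : μ.erase c hc ⋖ μ :=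
  CovBy.of_image cellsEmbedding (Finset.erase_covBy hc.1)

theorem covBy_insert (hc : Minimal (· ∉ μ) c) : μ ⋖ μ.insert c hc :=
  CovBy.of_image cellsEmbedding (Finset.covBy_cons hc.1)

theorem exists_eq_erase_of_covBy (h : ν ⋖ μ) : ∃ c hc, ν = μ.erase c hc := by
  obtain ⟨c, hc⟩ := Finset.exists_maximal (Finset.sdiff_nonempty.2
    fun hsub => h.lt.not_ge (cells_subset_iff.1 hsub))
  simp only [Finset.mem_sdiff, mem_cells] at hc
  have hcμ : Maximal (· ∈ μ) c := ⟨hc.1.1, fun y hy hcy => by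
    by_contra hyc
    have hyν : y ∈ ν := by_contra fun hyν => hyc (hc.2 ⟨hy, hyν⟩ hcy)
    exact hc.1.2 (ν.isLowerSet hcy hyν)⟩
  have hν : ν ≤ μ.erase c hcμ := fun x hx =>
    mem_erase.2 ⟨fun hxc => hc.1.2 (hxc ▸ hx), h.le hx⟩
  exact ⟨c, hcμ, hν.eq_of_not_lt fun hlt => h.2 hlt (erase_covBy hcμ).lt⟩

theorem exists_eq_insert_of_covBy (h : μ ⋖ ν) : ∃ c hc, ν = μ.insert c hc := by
  obtain ⟨c, hc⟩ := Finset.exists_minimal (Finset.sdiff_nonempty.2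
    fun hsub => h.lt.not_ge (cells_subset_iff.1 hsub))
  simp only [Finset.mem_sdiff, mem_cells] at hc
  have hcμ : Minimal (· ∉ μ) c := ⟨hc.1.2, fun y hy hyc => by
    by_contra hcy
    exact hy (by_contra fun hyμ => hcy (hc.2 ⟨ν.isLowerSet hyc hc.1.1, hyμ⟩ hyc))⟩
  have hν : μ.insert c hcμ ≤ ν := fun x hx => by
    rcases mem_insert.1 hx with rfl | hx
    exacts [hc.1.1, h.le hx]
  exact ⟨c, hcμ, (hν.eq_of_not_lt fun hlt => h.2 (covBy_insert hcμ).lt hlt).symm⟩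

theorem card_erase (hc : Maximal (· ∈ μ) c) : (μ.erase c hc).card + 1 = μ.card :=
  Finset.card_erase_add_one hc.1

theorem card_eq_of_covBy (h : ν ⋖ μ) : μ.card = ν.card + 1 := by
  obtain ⟨c, hc, rfl⟩ := exists_eq_erase_of_covBy h
  exact (card_erase hc).symm

theorem card_eq_zero : μ.card = 0 ↔ μ = ⊥ := by
  rw [YoungDiagram.card, Finset.card_eq_zero, ← cells_bot, ← YoungDiagram.ext_iff]

theorem le_card_of_mem (hc : c ∈ μ) : c ≤ (μ.card, μ.card) := by
  have h : #(Finset.Iic c) ≤ μ.card :=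
    Finset.card_le_card fun x hx => μ.isLowerSet (Finset.mem_Iic.1 hx) hc
  rw [Finset.card_Iic_prod, Nat.card_Iic, Nat.card_Iic] at h
  exact ⟨by nlinarith, by nlinarith⟩

theorem finite_setOf_card_eq (n : ℕ) : {μ : YoungDiagram | μ.card = n}.Finite := by
  refine ((Finset.Iic (n, n)).powerset.finite_toSet.preimage
    cellsEmbedding.injective.injOn).subset ?_
  rintro μ rfl
  exact Finset.mem_coe.2 (Finset.mem_powerset.2 fun c hc => Finset.mem_Iic.2 (le_card_of_mem hc))

noncomputable def withCard (n : ℕ) : Finset YoungDiagram :=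
  (finite_setOf_card_eq n).toFinset

noncomputable def upCovers (μ : YoungDiagram) : Finset YoungDiagram :=
  Set.Finite.toFinset (s := {ν | μ ⋖ ν}) <|
    (finite_setOf_card_eq (μ.card + 1)).subset fun _ h => card_eq_of_covBy h

noncomputable def downCovers (μ : YoungDiagram) : Finset YoungDiagram :=
  Set.Finite.toFinset (s := {ν | ν ⋖ μ}) <|
    (finite_setOf_card_eq (μ.card - 1)).subset fun _ h => by simp [card_eq_of_covBy h]

@[simp] theorem mem_withCard {n : ℕ} : μ ∈ withCard n ↔ μ.card = n :=
  Set.Finite.mem_toFinset _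

theorem coe_withCard (n : ℕ) : (withCard n : Set YoungDiagram) = {μ | μ.card = n} :=
  Set.Finite.coe_toFinset _

@[simp] theorem mem_upCovers : ν ∈ μ.upCovers ↔ μ ⋖ ν :=
  Set.Finite.mem_toFinset _

@[simp] theorem mem_downCovers : ν ∈ μ.downCovers ↔ ν ⋖ μ :=
  Set.Finite.mem_toFinset _

theorem withCard_zero : withCard 0 = {⊥} := by
  ext μ
  rw [mem_withCard, card_eq_zero, Finset.mem_singleton]

noncomputable def cornerEquivDownCovers (μ : YoungDiagram) :
    {c // Maximal (· ∈ μ) c} ≃ μ.downCovers :=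
  Equiv.ofBijective (fun c => ⟨μ.erase c c.2, mem_downCovers.2 (erase_covBy c.2)⟩)
    ⟨fun c c' h => Subtype.ext <| by
      by_contra hne
      have hc : c.1 ∈ μ.erase c'.1 c'.2 := mem_erase.2 ⟨hne, c.2.1⟩
      have h : μ.erase c c.2 = μ.erase c' c'.2 := congrArg Subtype.val h
      rw [← h] at hc
      exact (mem_erase.1 hc).1 rfl,
    fun ν => by
      obtain ⟨c, hc, h⟩ := exists_eq_erase_of_covBy (mem_downCovers.1 ν.2)
      exact ⟨⟨c, hc⟩, Subtype.ext h.symm⟩⟩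

noncomputable def addableEquivUpCovers (μ : YoungDiagram) :
    {c // Minimal (· ∉ μ) c} ≃ μ.upCovers :=
  Equiv.ofBijective (fun c => ⟨μ.insert c c.2, mem_upCovers.2 (covBy_insert c.2)⟩)
    ⟨fun c c' h => Subtype.ext <| by
      have h : μ.insert c c.2 = μ.insert c' c'.2 := congrArg Subtype.val h
      have hc : c.1 ∈ μ.insert c'.1 c'.2 := by
        rw [← h]
        exact mem_insert.2 (Or.inl rfl)
      exact (mem_insert.1 hc).resolve_right c.2.1,
    fun ν => by
      obtain ⟨c, hc, h⟩ := exists_eq_insert_of_covBy (mem_upCovers.1 ν.2)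
      exact ⟨⟨c, hc⟩, Subtype.ext h.symm⟩⟩

instance (μ : YoungDiagram) : Finite {c // Maximal (· ∈ μ) c} :=
  .of_equiv _ (cornerEquivDownCovers μ).symm

theorem maximal_mem_iff_succ {i j : ℕ} :
    Maximal (· ∈ μ) (i, j) ↔ (i, j) ∈ μ ∧ (i + 1, j) ∉ μ ∧ (i, j + 1) ∉ μ := by
  rw [maximal_iff_forall_gt]
  refine and_congr_right fun _ => ⟨fun h => ⟨h (Prod.lt_iff.2 (Or.inl ⟨i.lt_succ_self, le_rfl⟩)),
    h (Prod.lt_iff.2 (Or.inr ⟨le_rfl, j.lt_succ_self⟩))⟩, fun ⟨hbelow, hright⟩ y hlt hy => ?_⟩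
  rcases Prod.lt_iff.1 hlt with ⟨hi, hj⟩ | ⟨hi, hj⟩
  · exact hbelow (μ.isLowerSet (Prod.mk_le_mk.2 ⟨hi, hj⟩) hy)
  · exact hright (μ.isLowerSet (Prod.mk_le_mk.2 ⟨hi, hj⟩) hy)

theorem maximal_mem_iff {i j : ℕ} :
    Maximal (· ∈ μ) (i, j) ↔ j + 1 = μ.rowLen i ∧ μ.rowLen (i + 1) ≤ j := by
  rw [maximal_mem_iff_succ, mem_iff_lt_rowLen, mem_iff_lt_rowLen, mem_iff_lt_rowLen]
  have := μ.rowLen_anti i (i + 1) i.le_succ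
  omega

theorem minimal_notMem_iff {i j : ℕ} :
    Minimal (· ∉ μ) (i, j) ↔ j = μ.rowLen i ∧ ∀ k < i, j < μ.rowLen k := by
  rw [minimal_iff_forall_lt, mem_iff_lt_rowLen]
  constructor
  · rintro ⟨hj, hlt⟩
    have hrow : j = μ.rowLen i := by
      by_contra hne
      have := hlt (y := (i, μ.rowLen i)) (Prod.lt_iff.2 (Or.inr ⟨le_rfl, by simp; omega⟩))
      rw [not_not, mem_iff_lt_rowLen] at this
      omega
    refine ⟨hrow, fun k hk => ?_⟩
    have := hlt (y := (k, j)) (Prod.lt_iff.2 (Or.inl ⟨hk, le_rfl⟩))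
    rwa [not_not, mem_iff_lt_rowLen] at this
  · rintro ⟨hrow, hk⟩
    refine ⟨by omega, fun ⟨a, b⟩ hlt => ?_⟩
    rw [not_not, mem_iff_lt_rowLen]
    rcases Prod.lt_iff.1 hlt with ⟨ha, hb⟩ | ⟨ha, hb⟩
    · exact lt_of_le_of_lt hb (hk a ha)
    · rcases (show a ≤ i from ha).lt_or_eq with ha | rfl
      · exact (show b < j from hb).trans (hk a ha)
      · exact hrow ▸ hb

noncomputable def optionCornerEquivAddable (μ : YoungDiagram) :
    Option {c // Maximal (· ∈ μ) c} ≃ {c // Minimal (· ∉ μ) c} :=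
  Equiv.ofBijective
    (fun o => o.elim ⟨(0, μ.rowLen 0), minimal_notMem_iff.2 ⟨rfl, by simp⟩⟩
      fun c => ⟨(c.1.1 + 1, μ.rowLen (c.1.1 + 1)), minimal_notMem_iff.2 ⟨rfl, fun k hk => by
        rcases c with ⟨⟨i, j⟩, hc⟩
        dsimp only at hk ⊢
        have := maximal_mem_iff.1 hc
        have := μ.rowLen_anti k i (by omega)
        omega⟩⟩)
    ⟨by
      rintro (_ | ⟨⟨i, j⟩, hc⟩) (_ | ⟨⟨i', j'⟩, hc'⟩) h <;>
        simp only [Option.elim, Subtype.mk.injEq, Prod.mk.injEq] at h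
      · rfl
      · omega
      · omega
      · obtain rfl : i = i' := by omega
        have := maximal_mem_iff.1 hc
        have := maximal_mem_iff.1 hc'
        obtain rfl : j = j' := by omega
        rfl,
    by
      rintro ⟨⟨_ | k, j⟩, hc⟩ <;> obtain ⟨rfl, hk⟩ := minimal_notMem_iff.1 hc
      · exact ⟨none, rfl⟩
      · have := hk k k.lt_succ_self
        exact ⟨some ⟨(k, μ.rowLen k - 1), maximal_mem_iff.2 ⟨by omega, by omega⟩⟩, rfl⟩⟩

theorem card_upCovers (μ : YoungDiagram) : #μ.upCovers = #μ.downCovers + 1 := by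
  rw [← Nat.card_eq_finsetCard, ← Nat.card_eq_finsetCard,
    ← Nat.card_congr (addableEquivUpCovers μ), ← Nat.card_congr (cornerEquivDownCovers μ),
    ← Nat.card_congr (optionCornerEquivAddable μ), Finite.card_option]

theorem card_upCovers_inter (μ ν : YoungDiagram) :
    #(μ.upCovers ∩ ν.upCovers) = #(μ.downCovers ∩ ν.downCovers) + if μ = ν then 1 else 0 := by
  split_ifs with h
  · subst h
    rw [Finset.inter_self, Finset.inter_self, card_upCovers]
  · rw [add_zero, ← Set.ncard_coe_finset, ← Set.ncard_coe_finset]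
    convert ncard_setOf_covBy_covBy_eq h using 2 <;> ext <;> simp

-- Read as operators on functions of diagrams, this is `D U = U D + I`.
theorem sum_upCovers_sum_downCovers {M : Type*} [AddCommMonoid M] (g : YoungDiagram → M)
    (μ : YoungDiagram) :
    ∑ ξ ∈ μ.upCovers, ∑ ν ∈ ξ.downCovers, g ν =
      g μ + ∑ ρ ∈ μ.downCovers, ∑ ν ∈ ρ.upCovers, g ν := by
  have hup : ∑ ξ ∈ μ.upCovers, ∑ ν ∈ ξ.downCovers, g ν =
      ∑ ν ∈ withCard μ.card, #(μ.upCovers ∩ ν.upCovers) • g ν := by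
    rw [Finset.sum_comm' (t' := withCard μ.card) (s' := fun ν => μ.upCovers ∩ ν.upCovers)]
    · simp only [Finset.sum_const]
    · intro ξ ν
      simp only [mem_upCovers, mem_downCovers, Finset.mem_inter, mem_withCard]
      refine ⟨fun ⟨hμ, hν⟩ => ⟨⟨hμ, hν⟩, ?_⟩, fun h => h.1⟩
      have := card_eq_of_covBy hμ
      have := card_eq_of_covBy hν
      omega
  have hdown : ∑ ρ ∈ μ.downCovers, ∑ ν ∈ ρ.upCovers, g ν =
      ∑ ν ∈ withCard μ.card, #(μ.downCovers ∩ ν.downCovers) • g ν := by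
    rw [Finset.sum_comm' (t' := withCard μ.card) (s' := fun ν => μ.downCovers ∩ ν.downCovers)]
    · simp only [Finset.sum_const]
    · intro ρ ν
      simp only [mem_upCovers, mem_downCovers, Finset.mem_inter, mem_withCard]
      refine ⟨fun ⟨hμ, hν⟩ => ⟨⟨hμ, hν⟩, ?_⟩, fun h => h.1⟩
      have := card_eq_of_covBy hμ
      have := card_eq_of_covBy hν
      omega
  rw [hup, hdown]
  simp only [card_upCovers_inter, add_smul, Finset.sum_add_distrib, ite_smul, one_smul, zero_smul,
    Finset.sum_ite_eq, if_pos (mem_withCard.2 rfl), add_comm]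

instance (μ : YoungDiagram) : Fintype {c // c ∈ μ} :=
  Fintype.subtype μ.cells mem_cells

theorem card_subtype_mem (μ : YoungDiagram) : Fintype.card {c // c ∈ μ} = μ.card :=
  Fintype.card_of_subtype μ.cells mem_cells

theorem card_pos_of_mem (hc : c ∈ μ) : 0 < μ.card :=
  Finset.card_pos.2 ⟨c, hc⟩

def LtInLine (c d : ℕ × ℕ) : Prop :=
  (c.1 = d.1 ∧ c.2 < d.2) ∨ (c.2 = d.2 ∧ c.1 < d.1)

theorem LtInLine.lt {c d : ℕ × ℕ} (h : LtInLine c d) : c < d := by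
  rcases h with ⟨h1, h2⟩ | ⟨h2, h1⟩
  · exact Prod.lt_iff.2 (Or.inr ⟨h1.le, h2⟩)
  · exact Prod.lt_iff.2 (Or.inl ⟨h1, h2.le⟩)

abbrev StandardTableau (μ : YoungDiagram) : Type :=
  {T : {c // c ∈ μ} ≃ Fin μ.card // ∀ c d : {c // c ∈ μ}, LtInLine c d → T c < T d}

theorem sytCard_eq_natCard (μ : YoungDiagram) : sytCard μ = Nat.card (StandardTableau μ) :=
  rfl

namespace StandardTableau

theorem ext {T T' : StandardTableau μ} (h : ∀ x, (T.1 x : ℕ) = T'.1 x) : T = T' :=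
  Subtype.ext (Equiv.ext fun x => Fin.ext (h x))

theorem maximal_of_val_add_one_eq_card (T : StandardTableau μ) {x : {c // c ∈ μ}}
    (hx : (T.1 x : ℕ) + 1 = μ.card) : Maximal (· ∈ μ) x.1 := by
  have hmax (y : {c // c ∈ μ}) : ¬T.1 x < T.1 y := fun h => by
    have := (T.1 y).isLt
    rw [Fin.lt_def] at h
    omega
  exact maximal_mem_iff_succ.2 ⟨x.2,
    fun h => hmax ⟨_, h⟩ (T.2 x ⟨_, h⟩ (Or.inr ⟨rfl, Nat.lt_succ_self _⟩)),
    fun h => hmax ⟨_, h⟩ (T.2 x ⟨_, h⟩ (Or.inl ⟨rfl, Nat.lt_succ_self _⟩))⟩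

noncomputable def ofInjective (f : {c // c ∈ μ} → ℕ) (hf : Function.Injective f)
    (hlt : ∀ x, f x < μ.card) (hf_lt : ∀ c d, LtInLine c.1 d.1 → f c < f d) :
    StandardTableau μ :=
  ⟨.ofBijective (fun x => ⟨f x, hlt x⟩) <| (Fintype.bijective_iff_injective_and_card _).2
    ⟨fun _ _ h => hf (Fin.ext_iff.1 h), by rw [card_subtype_mem, Fintype.card_fin]⟩, hf_lt⟩

abbrev MaxAt (μ : YoungDiagram) (x : {c // c ∈ μ}) : Type :=
  {T : StandardTableau μ // (T.1 x : ℕ) + 1 = μ.card}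

section Corner

variable (hc : Maximal (· ∈ μ) c)

noncomputable def restrict (T : MaxAt μ ⟨c, hc.1⟩) : StandardTableau (μ.erase c hc) :=
  ofInjective (fun x => T.1.1 ⟨x.1, (mem_erase.1 x.2).2⟩)
    (fun x y h => Subtype.ext (Subtype.mk.inj (T.1.1.injective (Fin.ext h))))
    (fun x => by
      have hne : T.1.1 ⟨x.1, (mem_erase.1 x.2).2⟩ ≠ T.1.1 ⟨c, hc.1⟩ :=
        T.1.1.injective.ne fun h => (mem_erase.1 x.2).1 (congrArg Subtype.val h)
      have := (T.1.1 ⟨x.1, (mem_erase.1 x.2).2⟩).isLt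
      have := card_erase hc
      have := T.2
      omega)
    (fun x y h => T.1.2 _ _ h)

theorem val_add_one_lt_card (S : StandardTableau (μ.erase c hc)) (x : {x // x ∈ μ.erase c hc}) :
    (S.1 x : ℕ) + 1 < μ.card :=
  (card_erase hc).symm ▸ Nat.succ_lt_succ (S.1 x).isLt

def extendFun (S : StandardTableau (μ.erase c hc)) (x : {x // x ∈ μ}) : ℕ :=
  if h : x.1 = c then μ.card - 1 else S.1 ⟨x.1, mem_erase.2 ⟨h, x.2⟩⟩

noncomputable def extend (S : StandardTableau (μ.erase c hc)) : MaxAt μ ⟨c, hc.1⟩ :=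
  ⟨ofInjective (extendFun hc S)
    (fun x y hxy => by
      rw [extendFun, extendFun] at hxy
      by_cases hx : x.1 = c <;> by_cases hy : y.1 = c <;>
        simp only [hx, hy, dite_true, dite_false] at hxy
      · exact Subtype.ext (hx.trans hy.symm)
      · have := val_add_one_lt_card hc S ⟨y.1, mem_erase.2 ⟨hy, y.2⟩⟩; omega
      · have := val_add_one_lt_card hc S ⟨x.1, mem_erase.2 ⟨hx, x.2⟩⟩; omega
      · exact Subtype.ext (Subtype.mk.inj (S.1.injective (Fin.ext hxy))))
    (fun x => by
      rw [extendFun]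
      split_ifs with hx
      · exact Nat.sub_lt (card_pos_of_mem hc.1) one_pos
      · have := val_add_one_lt_card hc S ⟨x.1, mem_erase.2 ⟨hx, x.2⟩⟩; omega)
    (fun x y hxy => by
      rw [extendFun, extendFun]
      by_cases hx : x.1 = c
      · exact absurd (hc.eq_of_ge y.2 (hx ▸ hxy.lt.le)) (hx ▸ hxy.lt.ne')
      by_cases hy : y.1 = c <;> simp only [hx, hy, dite_true, dite_false]
      · have := val_add_one_lt_card hc S ⟨x.1, mem_erase.2 ⟨hx, x.2⟩⟩; omega
      · exact S.2 ⟨x.1, _⟩ ⟨y.1, _⟩ hxy),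
    show extendFun hc S ⟨c, hc.1⟩ + 1 = μ.card by
      rw [extendFun, dif_pos rfl, Nat.sub_add_cancel (card_pos_of_mem hc.1)]⟩

theorem restrict_apply (T : MaxAt μ ⟨c, hc.1⟩) (x : {x // x ∈ μ.erase c hc}) :
    ((restrict hc T).1 x : ℕ) = T.1.1 ⟨x.1, (mem_erase.1 x.2).2⟩ :=
  rfl

theorem extend_apply (S : StandardTableau (μ.erase c hc)) (x : {x // x ∈ μ}) :
    ((extend hc S).1.1 x : ℕ) = extendFun hc S x :=
  rfl

noncomputable def maxAtEquiv : MaxAt μ ⟨c, hc.1⟩ ≃ StandardTableau (μ.erase c hc) where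
  toFun := restrict hc
  invFun := extend hc
  left_inv T := Subtype.ext <| StandardTableau.ext fun x => by
    rw [extend_apply, extendFun]
    split_ifs with hx
    · obtain rfl : x = ⟨c, hc.1⟩ := Subtype.ext hx
      have := T.2
      omega
    · exact restrict_apply hc T _
  right_inv S := StandardTableau.ext fun x => by
    rw [restrict_apply, extend_apply, extendFun, dif_neg (mem_erase.1 x.2).1]

end Corner

end StandardTableau

theorem sytCard_bot : sytCard ⊥ = 1 := by
  have : IsEmpty {c // c ∈ (⊥ : YoungDiagram)} := ⟨fun c => notMem_bot c.1 c.2⟩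
  have : IsEmpty (Fin (⊥ : YoungDiagram).card) := by rw [card_eq_zero.2 rfl]; infer_instance
  rw [sytCard_eq_natCard, Nat.card_eq_one_iff_unique]
  exact ⟨⟨fun T T' => StandardTableau.ext fun x => isEmptyElim x⟩,
    ⟨⟨Equiv.equivOfIsEmpty _ _, fun c => isEmptyElim c⟩⟩⟩

theorem sytCard_eq_sum_downCovers (hμ : μ.card ≠ 0) :
    sytCard μ = ∑ ν ∈ μ.downCovers, sytCard ν := by
  let top : Fin μ.card := ⟨μ.card - 1, by omega⟩
  let topCorner (T : StandardTableau μ) : {c // Maximal (· ∈ μ) c} :=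
    ⟨_, T.maximal_of_val_add_one_eq_card (x := T.1.symm top) <| by
      rw [Equiv.apply_symm_apply]
      exact Nat.sub_add_cancel (Nat.pos_of_ne_zero hμ)⟩
  have hfiber (c : {c // Maximal (· ∈ μ) c}) (T : StandardTableau μ) :
      topCorner T = c ↔ (T.1 ⟨c, c.2.1⟩ : ℕ) + 1 = μ.card := by
    rw [Subtype.ext_iff, ← Subtype.ext_iff (a2 := ⟨c.1, c.2.1⟩), Equiv.symm_apply_eq, eq_comm,
      Fin.ext_iff]
    dsimp only [top]
    omega
  have := Fintype.ofFinite {c // Maximal (· ∈ μ) c}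
  calc sytCard μ = Nat.card (Σ c, {T // topCorner T = c}) :=
        Nat.card_congr (Equiv.sigmaFiberEquiv topCorner).symm
    _ = ∑ c : {c // Maximal (· ∈ μ) c}, sytCard (μ.erase c c.2) := by
        rw [Nat.card_sigma]
        exact Finset.sum_congr rfl fun c _ => Nat.card_congr
          ((Equiv.subtypeEquivRight (hfiber c)).trans (StandardTableau.maxAtEquiv c.2))
    _ = ∑ ν ∈ μ.downCovers, sytCard ν := by
        rw [← Finset.sum_coe_sort μ.downCovers]
        exact Fintype.sum_equiv (cornerEquivDownCovers μ) _ _ fun c => rfl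

theorem sum_sytCard_upCovers (μ : YoungDiagram) :
    ∑ ν ∈ μ.upCovers, sytCard ν = (μ.card + 1) * sytCard μ := by
  induction hn : μ.card using Nat.strong_induction_on generalizing μ with
  | _ n ih =>
  calc ∑ ν ∈ μ.upCovers, sytCard ν = ∑ ξ ∈ μ.upCovers, ∑ ν ∈ ξ.downCovers, sytCard ν :=
        Finset.sum_congr rfl fun ξ hξ => sytCard_eq_sum_downCovers <| by
          rw [card_eq_of_covBy (mem_upCovers.1 hξ)]; omega
    _ = sytCard μ + ∑ ρ ∈ μ.downCovers, ∑ ν ∈ ρ.upCovers, sytCard ν :=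
        sum_upCovers_sum_downCovers _ μ
    _ = sytCard μ + n * ∑ ρ ∈ μ.downCovers, sytCard ρ := by
        rw [Finset.mul_sum]
        refine congrArg _ (Finset.sum_congr rfl fun ρ hρ => ?_)
        have hρ := card_eq_of_covBy (mem_downCovers.1 hρ)
        rw [ih ρ.card (by omega) ρ rfl]
        congr 1
        omega
    _ = (n + 1) * sytCard μ := by
        rcases Nat.eq_zero_or_pos n with rfl | hpos
        · ring
        · rw [← sytCard_eq_sum_downCovers (by omega)]
          ring

theorem sum_sq_sytCard_withCard (n : ℕ) : ∑ μ ∈ withCard n, sytCard μ ^ 2 = n.factorial := by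
  induction n with
  | zero => rw [withCard_zero, Finset.sum_singleton, sytCard_bot]; rfl
  | succ n ih =>
    calc ∑ μ ∈ withCard (n + 1), sytCard μ ^ 2
        = ∑ μ ∈ withCard (n + 1), ∑ ν ∈ μ.downCovers, sytCard ν * sytCard μ :=
          Finset.sum_congr rfl fun μ hμ => by
            rw [sq, ← Finset.sum_mul, ← sytCard_eq_sum_downCovers (by simp_all)]
      _ = ∑ ν ∈ withCard n, ∑ μ ∈ ν.upCovers, sytCard ν * sytCard μ := by
          refine Finset.sum_comm' fun μ ν => ?_
          simp only [mem_withCard, mem_downCovers, mem_upCovers]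
          exact ⟨fun ⟨hμ, h⟩ => ⟨h, by have := card_eq_of_covBy h; omega⟩,
            fun ⟨h, hν⟩ => ⟨by rw [card_eq_of_covBy h, hν], h⟩⟩
      _ = ∑ ν ∈ withCard n, (n + 1) * sytCard ν ^ 2 := Finset.sum_congr rfl fun ν hν => by
          rw [← Finset.mul_sum, sum_sytCard_upCovers, mem_withCard.1 hν]
          ring
      _ = (n + 1).factorial := by rw [← Finset.mul_sum, ih, Nat.factorial_succ]

end YoungDiagram

/-- Burnside identity / RSK: `∑_{λ ⊢ n} (f^λ)^2 = n!`, the sum being over all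
Young diagrams with `n` cells. -/
theorem sum_syt_sq_eq_factorial (n : ℕ) :
    ∑ᶠ μ : {μ : YoungDiagram // μ.card = n}, (sytCard μ.1) ^ 2 = Nat.factorial n := by
  calc ∑ᶠ μ : {μ : YoungDiagram // μ.card = n}, sytCard μ.1 ^ 2
      = ∑ᶠ μ ∈ {μ : YoungDiagram | μ.card = n}, sytCard μ ^ 2 :=
        finsum_set_coe_eq_finsum_mem (f := fun μ => sytCard μ ^ 2) {μ | μ.card = n}
    _ = n.factorial := by
      rw [← YoungDiagram.coe_withCard, finsum_mem_coe_finset,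
        YoungDiagram.sum_sq_sytCard_withCard]
end

section
/- Let λ be a partition with λ_1 = a columns and ℓ(λ) = b rows. Then the product over cells (i,j) of λ of (i+j−1) is at least the product over cells of λ of the hook lengths h_λ(i,j). -/
/-!
Induction on the number of rows, in 0-based coordinates (the paper's `i + j - 1` is
`c.1 + c.2 + 1` here). Deleting the first row of `λ` and moving the rest up one step keeps
every other hook length; in the product of the `c.1 + c.2 + 1`, column `j` (of length `c_j`)
loses exactly its bottom factor `c_j + j`. The first-row hooks are `c_j + (λ_1 - 1 - j)`, so it
remains to see `∏ j, (c_j + (λ_1 - 1 - j)) ≤ ∏ j, (c_j + j)`: a rearrangement inequality for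
the decreasing sequence `c_j`, proved by exchanging the factors at `j` and `λ_1 - 1 - j`.
-/

open Finset

theorem Antitone.prod_range_add_reflect_le {c : ℕ → ℕ} (hc : Antitone c) (n : ℕ) :
    ∏ j ∈ range n, (c j + (n - 1 - j)) ≤ ∏ j ∈ range n, (c j + j) := by
  match n with
  | 0 => simp
  | 1 => simp
  | n + 2 =>
    have hmid := Antitone.prod_range_add_reflect_le (c := fun j => c (j + 1) + 1)
      (fun i j hij => by simpa using hc (Nat.succ_le_succ hij)) n
    have hinner : ∏ j ∈ range n, (c (j + 1) + (n + 2 - 1 - (j + 1))) ≤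
        ∏ j ∈ range n, (c (j + 1) + (j + 1)) :=
      calc _ = ∏ j ∈ range n, (c (j + 1) + 1 + (n - 1 - j)) :=
            prod_congr rfl fun j hj => by have := mem_range.1 hj; omega
        _ ≤ _ := hmid
        _ = _ := prod_congr rfl fun j _ => by ring
    have hends : (c 0 + (n + 2 - 1 - 0)) * (c (n + 1) + (n + 2 - 1 - (n + 1))) ≤
        (c 0 + 0) * (c (n + 1) + (n + 1)) := by
      rw [show n + 2 - 1 - 0 = n + 1 by omega, show n + 2 - 1 - (n + 1) = 0 by omega]
      nlinarith [hc (Nat.zero_le (n + 1))]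
    rw [prod_range_succ _ (n + 1), prod_range_succ _ (n + 1), prod_range_succ' _ n,
      prod_range_succ' _ n, mul_assoc, mul_assoc]
    exact Nat.mul_le_mul hinner hends

namespace YoungDiagram

def hookLength (μ : YoungDiagram) (c : ℕ × ℕ) : ℕ :=
  μ.rowLen c.1 + μ.colLen c.2 - c.1 - c.2 - 1

noncomputable def dropFirstRow (μ : YoungDiagram) : YoungDiagram where
  cells := μ.cells.preimage (fun c => (c.1 + 1, c.2))
    (Set.injOn_of_injective fun c d h => by
      simp only [Prod.mk.injEq, Nat.add_right_cancel_iff] at h; exact Prod.ext h.1 h.2)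
  isLowerSet c d hdc hc := by
    rw [mem_coe, Finset.mem_preimage] at hc ⊢
    exact μ.isLowerSet (Prod.mk_le_mk.2 ⟨Nat.succ_le_succ hdc.1, hdc.2⟩) hc

@[simp]
theorem mem_dropFirstRow {μ : YoungDiagram} {c : ℕ × ℕ} :
    c ∈ μ.dropFirstRow ↔ (c.1 + 1, c.2) ∈ μ := by
  simp [← mem_cells, dropFirstRow]

theorem rowLen_dropFirstRow (μ : YoungDiagram) (i : ℕ) :
    μ.dropFirstRow.rowLen i = μ.rowLen (i + 1) :=
  eq_of_forall_lt_iff fun j => by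
    rw [← mem_iff_lt_rowLen, ← mem_iff_lt_rowLen, mem_dropFirstRow]

theorem colLen_dropFirstRow (μ : YoungDiagram) (j : ℕ) :
    μ.dropFirstRow.colLen j = μ.colLen j - 1 :=
  eq_of_forall_lt_iff fun i => by
    rw [← mem_iff_lt_colLen, mem_dropFirstRow, mem_iff_lt_colLen]
    dsimp only
    omega

theorem prod_cells_eq_prod_rows {M : Type*} [CommMonoid M] (μ : YoungDiagram) {n : ℕ}
    (hn : μ.colLen 0 ≤ n) (f : ℕ × ℕ → M) :
    ∏ c ∈ μ.cells, f c = ∏ i ∈ range n, ∏ j ∈ range (μ.rowLen i), f (i, j) :=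
  prod_finset_product _ _ _ fun c => by
    rw [mem_cells, mem_range, mem_range, ← mem_iff_lt_rowLen]
    refine ⟨fun h => ⟨?_, h⟩, And.right⟩
    exact (mem_iff_lt_colLen.1 (μ.up_left_mem le_rfl (Nat.zero_le _) h)).trans_le hn

theorem prod_cells_eq_prod_cols {M : Type*} [CommMonoid M] (μ : YoungDiagram) {n : ℕ}
    (hn : μ.rowLen 0 ≤ n) (f : ℕ × ℕ → M) :
    ∏ c ∈ μ.cells, f c = ∏ j ∈ range n, ∏ i ∈ range (μ.colLen j), f (i, j) :=
  prod_finset_product_right _ _ _ fun c => by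
    rw [mem_cells, mem_range, mem_range, ← mem_iff_lt_colLen]
    refine ⟨fun h => ⟨?_, h⟩, And.right⟩
    exact (mem_iff_lt_rowLen.1 (μ.up_left_mem (Nat.zero_le _) le_rfl h)).trans_le hn

theorem prod_cells_eq_mul_prod_dropFirstRow {M : Type*} [CommMonoid M] (μ : YoungDiagram)
    (f : ℕ × ℕ → M) :
    ∏ c ∈ μ.cells, f c =
      (∏ j ∈ range (μ.rowLen 0), f (0, j)) *
        ∏ c ∈ μ.dropFirstRow.cells, f (c.1 + 1, c.2) := by
  rw [μ.prod_cells_eq_prod_rows (Nat.le_succ _), prod_range_succ', mul_comm,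
    μ.dropFirstRow.prod_cells_eq_prod_rows (n := μ.colLen 0)
      (by rw [colLen_dropFirstRow]; omega)]
  simp only [rowLen_dropFirstRow]

theorem hookLength_dropFirstRow {μ : YoungDiagram} {c : ℕ × ℕ} (hc : c ∈ μ.dropFirstRow) :
    μ.dropFirstRow.hookLength c = μ.hookLength (c.1 + 1, c.2) := by
  have := mem_iff_lt_colLen.1 (mem_dropFirstRow.1 hc)
  simp only [hookLength, rowLen_dropFirstRow, colLen_dropFirstRow]
  omega

theorem hookLength_firstRow {μ : YoungDiagram} {j : ℕ} (hj : j < μ.rowLen 0) :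
    μ.hookLength (0, j) = μ.colLen j + (μ.rowLen 0 - 1 - j) := by
  have := mem_iff_lt_colLen.1 (mem_iff_lt_rowLen.2 hj)
  simp only [hookLength]
  omega

theorem prod_cells_add_eq_mul_prod_dropFirstRow (μ : YoungDiagram) :
    ∏ c ∈ μ.cells, (c.1 + c.2 + 1) =
      (∏ j ∈ range (μ.rowLen 0), (μ.colLen j + j)) *
        ∏ c ∈ μ.dropFirstRow.cells, (c.1 + c.2 + 1) := by
  rw [μ.prod_cells_eq_prod_cols le_rfl,
    μ.dropFirstRow.prod_cells_eq_prod_cols (n := μ.rowLen 0)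
      (by rw [rowLen_dropFirstRow]; exact μ.rowLen_anti _ _ (Nat.zero_le 1)),
    ← prod_mul_distrib]
  refine prod_congr rfl fun j hj => ?_
  obtain ⟨m, hm⟩ : ∃ m, μ.colLen j = m + 1 :=
    Nat.exists_eq_add_one.2 (mem_iff_lt_colLen.1 (mem_iff_lt_rowLen.2 (mem_range.1 hj)))
  rw [colLen_dropFirstRow, hm, prod_range_succ, mul_comm, Nat.add_sub_cancel]
  ring

theorem prod_hookLength_le (μ : YoungDiagram) :
    ∏ c ∈ μ.cells, μ.hookLength c ≤ ∏ c ∈ μ.cells, (c.1 + c.2 + 1) := by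
  by_cases h : μ.colLen 0 = 0
  · simp [μ.prod_cells_eq_prod_rows h.le]
  calc ∏ c ∈ μ.cells, μ.hookLength c
      = (∏ j ∈ range (μ.rowLen 0), (μ.colLen j + (μ.rowLen 0 - 1 - j))) *
          ∏ c ∈ μ.dropFirstRow.cells, μ.dropFirstRow.hookLength c := by
        rw [prod_cells_eq_mul_prod_dropFirstRow]
        congr 1 <;> refine prod_congr rfl fun c hc => ?_
        · exact hookLength_firstRow (mem_range.1 hc)
        · exact (hookLength_dropFirstRow hc).symm
    _ ≤ (∏ j ∈ range (μ.rowLen 0), (μ.colLen j + j)) *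
          ∏ c ∈ μ.dropFirstRow.cells, (c.1 + c.2 + 1) :=
        Nat.mul_le_mul (Antitone.prod_range_add_reflect_le (μ.colLen_anti · ·) _)
          (prod_hookLength_le μ.dropFirstRow)
    _ = ∏ c ∈ μ.cells, (c.1 + c.2 + 1) := (prod_cells_add_eq_mul_prod_dropFirstRow μ).symm
termination_by μ.colLen 0
decreasing_by rw [colLen_dropFirstRow]; omega

end YoungDiagram

theorem rectangle_hooks_ge_hooks_general (μ : YoungDiagram) :
    ∏ c ∈ μ.cells, (μ.rowLen c.1 + μ.colLen c.2 - c.1 - c.2 - 1) ≤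
      ∏ c ∈ μ.cells, (c.1 + c.2 + 1) :=
  μ.prod_hookLength_le

/-- For a Young diagram `λ` with `a = λ_1` columns and `b = ℓ(λ)` rows, the
product over all cells of the rectangle hook lengths `i + j - 1` (1-based), i.e.
`i + j + 1` in 0-based coordinates, is at least the product of the hook lengths
`h_λ(i,j)` (which in 0-based coordinates equal `rowLen i + colLen j - i - j - 1`). -/
theorem rectangle_hooks_ge_hooks (μ : YoungDiagram) (a b : ℕ)
    (ha : μ.rowLen 0 = a) (hb : μ.colLen 0 = b) :
    ∏ c ∈ μ.cells, (μ.rowLen c.1 + μ.colLen c.2 - c.1 - c.2 - 1) ≤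
      ∏ c ∈ μ.cells, (c.1 + c.2 + 1) :=
  rectangle_hooks_ge_hooks_general μ
end

section
/- Let T(λ,μ) denote the number of nonnegative integer matrices with row sums λ and column sums μ. If λ majorizes ν and μ majorizes τ (with equal total sums), then T(λ,μ) ≤ T(ν,τ). -/
/-- The number `T(λ,μ)` of contingency tables: nonnegative integer matrices
(supported on an `N × N` grid) with row sums `λ` and column sums `μ`. -/
noncomputable def contTables (N : ℕ) (lam mu : ℕ → ℕ) : ℕ :=
  Nat.card {M : ℕ → ℕ → ℕ //
    (∀ i j, M i j ≠ 0 → i < N ∧ j < N) ∧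
    (∀ i, ∑ j ∈ Finset.range N, M i j = lam i) ∧
    (∀ j, ∑ i ∈ Finset.range N, M i j = mu j)}

/-!
Transposing tables swaps the two margins, so it suffices to lower the row margin from `λ` to `ν`.
Since `ν` is weakly decreasing, `λ` can be turned into `ν` by Robin Hood transfers, each moving one
unit from a part `λ_a` to a smaller part `λ_b` with `a < b` while keeping `λ ⊵ ν`; the sum of the
partial sums of `λ` drops with each transfer. A transfer does not decrease `T`: once the other
rows and the sum `m` of rows `a` and `b` are fixed, the tables correspond to the vectors
`0 ≤ x ≤ m` with `|x| = λ_a`, and the number of such vectors is symmetric and unimodal in `|x|`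
around `|m| / 2 = (λ_a + λ_b) / 2 < λ_a`, hence does not decrease when `λ_a` drops by one.
-/

open Finset

theorem apply_le_apply_of_le_of_add_le {g : ℕ → ℕ} {T : ℕ} (hsymm : ∀ k ≤ T, g (T - k) = g k)
    (hstep : ∀ k, 2 * (k + 1) ≤ T → g k ≤ g (k + 1)) {j k : ℕ} (hjk : j ≤ k) (hT : j + k ≤ T) :
    g j ≤ g k := by
  have hmono : MonotoneOn g (Set.Iic (T / 2)) :=
    monotoneOn_of_le_succ Set.ordConnected_Iic fun a _ _ ha => by
      simp only [Order.succ_eq_add_one, Set.mem_Iic] at ha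
      exact hstep a (by omega)
  rcases le_total (2 * k) T with hk | hk
  · exact hmono (Set.mem_Iic.2 (by omega)) (Set.mem_Iic.2 (by omega)) hjk
  · rw [← hsymm k (by omega)]
    exact hmono (Set.mem_Iic.2 (by omega)) (Set.mem_Iic.2 (by omega)) (by omega)

theorem sum_Icc_sub_le_sum_Icc_succ_sub {g : ℕ → ℕ} {w k : ℕ} (h : w ≤ k → g (k - w) ≤ g (k + 1)) :
    ∑ j ∈ Icc (k - w) k, g j ≤ ∑ j ∈ Icc (k + 1 - w) (k + 1), g j := by
  rcases lt_or_ge k w with hkw | hwk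
  · rw [show k + 1 - w = k - w by omega]
    exact sum_le_sum_of_subset (Icc_subset_Icc_right k.le_succ)
  · rw [sum_Icc_succ_top (by omega), ← sum_Ioc_add_eq_sum_Icc (by omega),
      show k + 1 - w = k - w + 1 by omega, Icc_add_one_left_eq_Ioc]
    gcongr
    exact h hwk

variable {ι : Type*} [DecidableEq ι]

def boundedCompositions (s : Finset ι) (m : ι → ℕ) (k : ℕ) : Finset (ι → ℕ) :=
  {x ∈ s.piAntidiag k | ∀ i ∈ s, x i ≤ m i}

section boundedCompositions

variable {s : Finset ι} {m : ι → ℕ} {k : ℕ}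

theorem mem_boundedCompositions {x : ι → ℕ} :
    x ∈ boundedCompositions s m k ↔
      (∑ i ∈ s, x i = k ∧ ∀ i, x i ≠ 0 → i ∈ s) ∧ ∀ i ∈ s, x i ≤ m i := by
  simp [boundedCompositions]

theorem apply_eq_zero_of_mem_boundedCompositions {x : ι → ℕ}
    (hx : x ∈ boundedCompositions s m k) {i : ι} (hi : i ∉ s) : x i = 0 :=
  of_not_not (mt ((mem_boundedCompositions.1 hx).1.2 i) hi)

theorem apply_le_of_mem_boundedCompositions {x : ι → ℕ} (hx : x ∈ boundedCompositions s m k)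
    {i : ι} (hi : i ∈ s) : x i ≤ k := by
  rw [← (mem_boundedCompositions.1 hx).1.1]
  exact single_le_sum (fun _ _ => Nat.zero_le _) hi

theorem le_of_mem_boundedCompositions {x : ι → ℕ} (hx : x ∈ boundedCompositions s m k) :
    x ≤ m := fun i => by
  by_cases hi : i ∈ s
  · exact (mem_boundedCompositions.1 hx).2 i hi
  · rw [apply_eq_zero_of_mem_boundedCompositions hx hi]
    exact Nat.zero_le _

theorem boundedCompositions_eq_empty (h : ∑ i ∈ s, m i < k) :
    boundedCompositions s m k = ∅ :=
  filter_eq_empty_iff.2 fun x hx hle => by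
    have := sum_le_sum hle
    rw [(mem_piAntidiag.1 hx).1] at this
    omega

theorem card_boundedCompositions_symm {l : ℕ} (h : k + l = ∑ i ∈ s, m i) :
    #(boundedCompositions s m k) = #(boundedCompositions s m l) := by
  set compl : (ι → ℕ) → ι → ℕ := fun x i => if i ∈ s then m i - x i else 0
  have maps : ∀ {k l}, k + l = ∑ i ∈ s, m i →
      Set.MapsTo compl (boundedCompositions s m k) (boundedCompositions s m l) := by
    intro k l h x hx
    obtain ⟨⟨hsum, hsupp⟩, hle⟩ := mem_boundedCompositions.1 hx
    refine mem_boundedCompositions.2 ⟨⟨?_, fun i hi => ?_⟩, fun i hi => ?_⟩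
    · rw [sum_congr rfl fun i hi => if_pos hi, sum_tsub_distrib s hle, hsum]
      omega
    · by_contra his
      exact hi (if_neg his)
    · simp [compl, hi]
  have invol : ∀ {k}, Set.LeftInvOn compl compl (boundedCompositions s m k) := by
    intro k x hx
    obtain ⟨⟨-, hsupp⟩, hle⟩ := mem_boundedCompositions.1 hx
    funext i
    by_cases hi : i ∈ s
    · simp [compl, hi, Nat.sub_sub_self (hle i hi)]
    · simp only [compl, hi, if_false]
      by_contra hne
      exact hi (hsupp i (Ne.symm hne))
  exact card_nbij' compl compl (maps h) (maps (by omega)) invol invol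

theorem update_zero_mem_boundedCompositions {i : ι} (hi : i ∉ s) {x : ι → ℕ}
    (hx : x ∈ boundedCompositions (insert i s) m k) :
    Function.update x i 0 ∈ boundedCompositions s m (k - x i) := by
  rw [mem_boundedCompositions, sum_insert hi] at hx
  obtain ⟨⟨hsum, hsupp⟩, hle⟩ := hx
  refine mem_boundedCompositions.2 ⟨⟨?_, fun t ht => ?_⟩, fun t ht => ?_⟩
  · rw [sum_update_of_notMem hi]
    omega
  · rcases eq_or_ne t i with rfl | hti
    · simp at ht
    · rw [Function.update_of_ne hti] at ht
      exact (mem_insert.1 (hsupp t ht)).resolve_left hti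
  · rw [Function.update_of_ne (ne_of_mem_of_not_mem ht hi)]
    exact hle t (mem_insert_of_mem ht)

theorem update_mem_boundedCompositions_insert {i : ι} (hi : i ∉ s) {y : ι → ℕ}
    (hy : y ∈ boundedCompositions s m k) {v : ℕ} (hv : v ≤ m i) :
    Function.update y i v ∈ boundedCompositions (insert i s) m (v + k) := by
  obtain ⟨⟨hsum, hsupp⟩, hle⟩ := mem_boundedCompositions.1 hy
  rw [mem_boundedCompositions, sum_insert hi, Function.update_self, sum_update_of_notMem hi, hsum]
  refine ⟨⟨rfl, fun t ht => ?_⟩, fun t ht => ?_⟩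
  · rcases eq_or_ne t i with rfl | hti
    · exact mem_insert_self t s
    · rw [Function.update_of_ne hti] at ht
      exact mem_insert_of_mem (hsupp t ht)
  · rcases eq_or_ne t i with rfl | hti
    · rwa [Function.update_self]
    · rw [Function.update_of_ne hti]
      exact hle t ((mem_insert.1 ht).resolve_left hti)

theorem card_boundedCompositions_insert {i : ι} (hi : i ∉ s) :
    #(boundedCompositions (insert i s) m k) =
      ∑ j ∈ Icc (k - m i) k, #(boundedCompositions s m j) := by
  have hxi : ∀ x ∈ boundedCompositions (insert i s) m k, x i ≤ k ∧ x i ≤ m i := fun x hx =>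
    ⟨apply_le_of_mem_boundedCompositions hx (mem_insert_self i s),
      le_of_mem_boundedCompositions hx i⟩
  rw [card_eq_sum_card_fiberwise (f := fun x => k - x i) (t := Icc (k - m i) k) fun x hx => by
    have := hxi x hx
    simp only [mem_coe, mem_Icc]
    omega]
  refine sum_congr rfl fun j hj => ?_
  rw [mem_Icc] at hj
  refine card_nbij' (Function.update · i 0) (Function.update · i (k - j)) ?_ ?_ ?_ ?_
  · intro x hx
    obtain ⟨hmem, rfl⟩ := mem_filter.1 hx
    exact update_zero_mem_boundedCompositions hi hmem
  · intro y hy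
    refine mem_filter.2 ⟨?_, by simp only [Function.update_self]; omega⟩
    simpa [show k - j + j = k by omega] using
      update_mem_boundedCompositions_insert hi (mem_coe.1 hy) (show k - j ≤ m i by omega)
  · intro x hx
    obtain ⟨hmem, rfl⟩ := mem_filter.1 hx
    have := hxi x hmem
    simp only [Function.update_idem]
    rw [show k - (k - x i) = x i by omega, Function.update_eq_self]
  · intro y hy
    simp only [Function.update_idem, Function.update_eq_self_iff]
    exact (apply_eq_zero_of_mem_boundedCompositions (mem_coe.1 hy) hi).symm

theorem card_boundedCompositions_le_of_le_of_add_le {j : ℕ} (hjk : j ≤ k)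
    (h : j + k ≤ ∑ i ∈ s, m i) :
    #(boundedCompositions s m j) ≤ #(boundedCompositions s m k) := by
  induction s using Finset.induction_on generalizing j k with
  | empty =>
    obtain ⟨rfl, rfl⟩ : j = 0 ∧ k = 0 := by simp only [sum_empty] at h; omega
    exact le_rfl
  | insert i s hi ih =>
    refine apply_le_apply_of_le_of_add_le (g := fun k => #(boundedCompositions (insert i s) m k))
      (fun k _ => card_boundedCompositions_symm (by omega)) (fun k hk => ?_) hjk h
    rw [sum_insert hi] at hk
    rw [card_boundedCompositions_insert hi, card_boundedCompositions_insert hi]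
    exact sum_Icc_sub_le_sum_Icc_succ_sub fun _ => ih (by omega) (by omega)

theorem card_boundedCompositions_le_pred (h : ∑ i ∈ s, m i < 2 * k) :
    #(boundedCompositions s m k) ≤ #(boundedCompositions s m (k - 1)) := by
  rcases lt_or_ge (∑ i ∈ s, m i) k with hk | hk
  · simp [boundedCompositions_eq_empty hk]
  · rw [card_boundedCompositions_symm (l := ∑ i ∈ s, m i - k) (by omega)]
    exact card_boundedCompositions_le_of_le_of_add_le (by omega) (by omega)

end boundedCompositions

theorem Nat.card_le_card_of_forall_card_fiber_le {α β γ : Type*} [Finite α] [Finite β]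
    (f : α → γ) (g : β → γ) (h : ∀ c, Nat.card {a // f a = c} ≤ Nat.card {b // g b = c}) :
    Nat.card α ≤ Nat.card β := by
  have e : ∀ c, {a // f a = c} ↪ {b // g b = c} := fun c => by
    have := Fintype.ofFinite {a // f a = c}
    have := Fintype.ofFinite {b // g b = c}
    have hc := h c
    rw [Nat.card_eq_fintype_card, Nat.card_eq_fintype_card] at hc
    exact (Function.Embedding.nonempty_of_card_le hc).some
  have : Finite (Σ c, {b // g b = c}) := Finite.of_equiv β (Equiv.sigmaFiberEquiv g).symm
  calc Nat.card α = Nat.card (Σ c, {a // f a = c}) := Nat.card_congr (Equiv.sigmaFiberEquiv f).symm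
    _ ≤ Nat.card (Σ c, {b // g b = c}) :=
      Nat.card_le_card_of_injective _ ((Function.Embedding.refl γ).sigmaMap e).injective
    _ = Nat.card β := Nat.card_congr (Equiv.sigmaFiberEquiv g)

theorem Finset.sum_eq_sum_of_add_eq_add {M : Type*} [AddCommMonoid M] {s : Finset ι} {a b : ι}
    (ha : a ∈ s) (hb : b ∈ s) (hab : a ≠ b) {F G : ι → M} (hpair : F a + F b = G a + G b)
    (hoff : ∀ i, i ≠ a → i ≠ b → F i = G i) : ∑ i ∈ s, F i = ∑ i ∈ s, G i := by
  have hsub : {a, b} ⊆ s := insert_subset ha (singleton_subset_iff.2 hb)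
  rw [← sum_sdiff hsub, ← sum_sdiff hsub (f := G), sum_pair hab, sum_pair hab, hpair]
  congr 1
  refine sum_congr rfl fun i hi => ?_
  simp only [mem_sdiff, mem_insert, mem_singleton, not_or] at hi
  exact hoff i hi.2.1 hi.2.2

section Rows

variable {α : Type*} (a b : ι)

def mergeRows [AddZeroClass α] (F : ι → α) : ι → α :=
  Function.update (Function.update F a (F a + F b)) b 0

def splitRows [Sub α] (K : ι → α) (x : α) : ι → α :=
  Function.update (Function.update K b (K a - x)) a x

variable {a b}

section
variable [AddZeroClass α] (F : ι → α)

@[simp] theorem mergeRows_apply_left (hab : a ≠ b) : mergeRows a b F a = F a + F b := by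
  simp [mergeRows, hab]

@[simp] theorem mergeRows_apply_right : mergeRows a b F b = 0 := by
  simp [mergeRows]

theorem mergeRows_apply_of_ne {i : ι} (hia : i ≠ a) (hib : i ≠ b) : mergeRows a b F i = F i := by
  simp [mergeRows, hia, hib]

end

section
variable [Sub α] (K : ι → α) (x : α)

@[simp] theorem splitRows_apply_left : splitRows a b K x a = x := by
  simp [splitRows]

@[simp] theorem splitRows_apply_right (hab : a ≠ b) : splitRows a b K x b = K a - x := by
  simp [splitRows, Ne.symm hab]

theorem splitRows_apply_of_ne {i : ι} (hia : i ≠ a) (hib : i ≠ b) : splitRows a b K x i = K i := by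
  simp [splitRows, hia, hib]

end

section
variable [AddCommMonoid α] [PartialOrder α] [Sub α] [OrderedSub α]

theorem mergeRows_splitRows [CanonicallyOrderedAdd α] (hab : a ≠ b) {K : ι → α} (hKb : K b = 0)
    {x : α} (hx : x ≤ K a) :
    mergeRows a b (splitRows a b K x) = K := by
  funext i
  rcases eq_or_ne i a with rfl | hia
  · simp [hab, add_tsub_cancel_of_le hx]
  rcases eq_or_ne i b with rfl | hib
  · simp [hKb]
  · rw [mergeRows_apply_of_ne _ hia hib, splitRows_apply_of_ne _ _ hia hib]

theorem splitRows_mergeRows [AddLeftReflectLE α] (hab : a ≠ b) (F : ι → α) :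
    splitRows a b (mergeRows a b F) (F a) = F := by
  funext i
  rcases eq_or_ne i a with rfl | hia
  · simp
  rcases eq_or_ne i b with rfl | hib
  · simp [hab]
  · rw [splitRows_apply_of_ne _ _ hia hib, mergeRows_apply_of_ne _ hia hib]

end

end Rows

def contingencyTables (N : ℕ) (lam mu : ℕ → ℕ) : Set (ℕ → ℕ → ℕ) :=
  {M | (∀ i j, M i j ≠ 0 → i < N ∧ j < N) ∧
    (∀ i, ∑ j ∈ range N, M i j = lam i) ∧
    (∀ j, ∑ i ∈ range N, M i j = mu j)}

section Tables

variable {N : ℕ} {lam mu : ℕ → ℕ}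

theorem contTables_eq_card (N : ℕ) (lam mu : ℕ → ℕ) :
    contTables N lam mu = Nat.card (contingencyTables N lam mu) := rfl

theorem row_mem_boundedCompositions {M : ℕ → ℕ → ℕ} (hM : M ∈ contingencyTables N lam mu)
    {i : ℕ} (hi : i < N) : M i ∈ boundedCompositions (range N) mu (lam i) := by
  refine mem_boundedCompositions.2 ⟨⟨hM.2.1 i, fun j hj => mem_range.2 (hM.1 i j hj).2⟩,
    fun j _ => ?_⟩
  rw [← hM.2.2 j]
  exact single_le_sum (f := fun i => M i j) (fun _ _ => Nat.zero_le _) (mem_range.2 hi)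

instance (N : ℕ) (lam mu : ℕ → ℕ) : Finite (contingencyTables N lam mu) := by
  refine Finite.of_injective (β := ∀ i : Fin N, boundedCompositions (range N) mu (lam i))
    (fun M i => ⟨M.1 i, row_mem_boundedCompositions M.2 i.2⟩) fun M M' hMM' => ?_
  ext i j
  by_cases hi : i < N
  · exact congrFun (congrArg Subtype.val (congrFun hMM' ⟨i, hi⟩)) j
  · have zero : ∀ M ∈ contingencyTables N lam mu, M i j = 0 := fun M hM => by
      by_contra hne
      exact hi (hM.1 i j hne).1
    rw [zero M M.2, zero M' M'.2]

theorem contTables_comm (N : ℕ) (lam mu : ℕ → ℕ) : contTables N lam mu = contTables N mu lam :=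
  Nat.card_congr
    { toFun := fun M => ⟨fun i j => M.1 j i, fun i j h => (M.2.1 j i h).symm, M.2.2.2, M.2.2.1⟩
      invFun := fun M => ⟨fun i j => M.1 j i, fun i j h => (M.2.1 j i h).symm, M.2.2.2, M.2.2.1⟩
      left_inv := fun _ => rfl
      right_inv := fun _ => rfl }

variable {r : ℕ → ℕ} {a b : ℕ}

theorem mergeRows_mem_contingencyTables (ha : a < N) (hb : b < N) (hab : a ≠ b) {M : ℕ → ℕ → ℕ}
    (hM : M ∈ contingencyTables N r mu) :
    mergeRows a b M ∈ contingencyTables N (mergeRows a b r) mu := by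
  obtain ⟨hsupp, hrow, hcol⟩ := hM
  refine ⟨fun i j hij => ?_, fun i => ?_, fun j => ?_⟩
  · rcases eq_or_ne i a with rfl | hia
    · rw [mergeRows_apply_left _ hab, Pi.add_apply] at hij
      refine ⟨ha, ?_⟩
      rcases Nat.eq_zero_or_pos (M i j) with h0 | h0
      · exact (hsupp b j (by omega)).2
      · exact (hsupp i j h0.ne').2
    rcases eq_or_ne i b with rfl | hib
    · simp at hij
    · rw [mergeRows_apply_of_ne _ hia hib] at hij
      exact hsupp i j hij
  · rcases eq_or_ne i a with rfl | hia
    · simp [hab, sum_add_distrib, hrow]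
    rcases eq_or_ne i b with rfl | hib
    · simp
    · rw [mergeRows_apply_of_ne _ hia hib, mergeRows_apply_of_ne _ hia hib, hrow]
  · rw [← hcol j]
    refine sum_eq_sum_of_add_eq_add (mem_range.2 ha) (mem_range.2 hb) hab ?_ fun i hia hib => ?_
    · simp [hab]
    · rw [mergeRows_apply_of_ne _ hia hib]

theorem row_eq_zero_of_mem_contingencyTables {M : ℕ → ℕ → ℕ} (hM : M ∈ contingencyTables N r mu)
    (hr : r a = 0) : M a = 0 := by
  funext j
  by_contra hne
  have hrow := hM.2.1 a
  rw [hr, sum_eq_zero_iff] at hrow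
  exact hne (hrow j (mem_range.2 (hM.1 a j hne).2))

theorem splitRows_mem_contingencyTables (ha : a < N) (hb : b < N) (hab : a ≠ b)
    {K : ℕ → ℕ → ℕ} (hK : K ∈ contingencyTables N (mergeRows a b r) mu) {x : ℕ → ℕ}
    (hx : x ∈ boundedCompositions (range N) (K a) (r a)) :
    splitRows a b K x ∈ contingencyTables N r mu := by
  have hKb := row_eq_zero_of_mem_contingencyTables hK (mergeRows_apply_right r)
  have hxle := le_of_mem_boundedCompositions hx
  obtain ⟨⟨hxsum, hxsupp⟩, -⟩ := mem_boundedCompositions.1 hx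
  obtain ⟨hsupp, hrow, hcol⟩ := hK
  refine ⟨fun i j hij => ?_, fun i => ?_, fun j => ?_⟩
  · rcases eq_or_ne i a with rfl | hia
    · rw [splitRows_apply_left] at hij
      exact ⟨ha, mem_range.1 (hxsupp j hij)⟩
    rcases eq_or_ne i b with rfl | hib
    · rw [splitRows_apply_right _ _ hab, Pi.sub_apply] at hij
      exact ⟨hb, (hsupp a j (by omega)).2⟩
    · rw [splitRows_apply_of_ne _ _ hia hib] at hij
      exact hsupp i j hij
  · rcases eq_or_ne i a with rfl | hia
    · simpa using hxsum
    rcases eq_or_ne i b with rfl | hib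
    · simp only [splitRows_apply_right _ _ hab, Pi.sub_apply]
      rw [sum_tsub_distrib _ fun j _ => hxle j, hrow, mergeRows_apply_left _ hab, hxsum]
      omega
    · rw [splitRows_apply_of_ne _ _ hia hib, hrow, mergeRows_apply_of_ne _ hia hib]
  · rw [← hcol j]
    refine sum_eq_sum_of_add_eq_add (mem_range.2 ha) (mem_range.2 hb) hab ?_ fun i hia hib => ?_
    · simp [hab, hKb, add_tsub_cancel_of_le (hxle j)]
    · rw [splitRows_apply_of_ne _ _ hia hib]

theorem card_fiber_mergeRows (ha : a < N) (hb : b < N) (hab : a ≠ b) {K : ℕ → ℕ → ℕ}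
    (hK : K ∈ contingencyTables N (mergeRows a b r) mu) :
    Nat.card {M : contingencyTables N r mu // mergeRows a b M.1 = K} =
      #(boundedCompositions (range N) (K a) (r a)) := by
  have hKb := row_eq_zero_of_mem_contingencyTables hK (mergeRows_apply_right r)
  rw [← Nat.card_eq_finsetCard]
  refine Nat.card_congr
    { toFun := fun M => ⟨M.1.1 a, ?_⟩
      invFun := fun x => ⟨⟨splitRows a b K x, splitRows_mem_contingencyTables ha hb hab hK x.2⟩,
        mergeRows_splitRows hab hKb (le_of_mem_boundedCompositions x.2)⟩
      left_inv := fun M => ?_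
      right_inv := fun x => Subtype.ext (splitRows_apply_left _ _) }
  · obtain ⟨⟨M, hM⟩, rfl⟩ := M
    refine mem_boundedCompositions.2 ⟨⟨hM.2.1 a, fun j hj => mem_range.2 (hM.1 a j hj).2⟩,
      fun j _ => ?_⟩
    simp [hab]
  · obtain ⟨⟨M, hM⟩, rfl⟩ := M
    exact Subtype.ext (Subtype.ext (splitRows_mergeRows hab M))

end Tables

theorem contTables_le_of_transfer {N : ℕ} {r r' mu : ℕ → ℕ} {a b : ℕ} (ha : a < N) (hb : b < N)
    (hba : r b < r a) (hr : r' + Pi.single a 1 = r + Pi.single b 1) :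
    contTables N r mu ≤ contTables N r' mu := by
  have hab : a ≠ b := by
    rintro rfl
    exact lt_irrefl _ hba
  have hra : r' a + 1 = r a := by simpa [hab] using congrFun hr a
  have hrb : r' b = r b + 1 := by simpa [hab.symm] using congrFun hr b
  have hmerge : mergeRows a b r' = mergeRows a b r := by
    funext i
    rcases eq_or_ne i a with rfl | hia
    · simp only [mergeRows_apply_left _ hab]
      omega
    rcases eq_or_ne i b with rfl | hib
    · simp
    · simpa [mergeRows_apply_of_ne _ hia hib, Pi.single_apply, hia, hib] using congrFun hr i
  rw [contTables_eq_card, contTables_eq_card]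
  refine Nat.card_le_card_of_forall_card_fiber_le (fun M => mergeRows a b M.1)
    (fun M => mergeRows a b M.1) fun K => ?_
  by_cases hK : K ∈ contingencyTables N (mergeRows a b r) mu
  · rw [card_fiber_mergeRows ha hb hab hK, card_fiber_mergeRows ha hb hab (hmerge ▸ hK),
      show r' a = r a - 1 by omega]
    apply card_boundedCompositions_le_pred
    rw [hK.2.1 a, mergeRows_apply_left _ hab]
    omega
  · have : IsEmpty {M : contingencyTables N r mu // mergeRows a b M.1 = K} :=
      ⟨fun ⟨M, hM⟩ => hK (hM ▸ mergeRows_mem_contingencyTables ha hb hab M.2)⟩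
    rw [Nat.card_of_isEmpty]
    exact Nat.zero_le _

def Majorizes (N : ℕ) (lam nu : ℕ → ℕ) : Prop :=
  (∀ i, N ≤ i → lam i = 0) ∧ ∑ i ∈ range N, lam i = ∑ i ∈ range N, nu i ∧
    ∀ k, ∑ i ∈ range k, nu i ≤ ∑ i ∈ range k, lam i

section Transfer

variable {r r' : ℕ → ℕ} {a b : ℕ}

theorem sum_range_add_ite_of_transfer (hr : r' + Pi.single a 1 = r + Pi.single b 1) (k : ℕ) :
    ∑ i ∈ range k, r' i + (if a < k then 1 else 0) =
      ∑ i ∈ range k, r i + (if b < k then 1 else 0) := by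
  simpa [sum_add_distrib, sum_pi_single'] using congrArg (fun f => ∑ i ∈ range k, f i) hr

theorem sum_partialSums_lt_of_transfer (hr : r' + Pi.single a 1 = r + Pi.single b 1) (hab : a < b)
    {N : ℕ} (hbN : b < N) :
    ∑ k ∈ range N, ∑ i ∈ range k, r' i < ∑ k ∈ range N, ∑ i ∈ range k, r i := by
  refine sum_lt_sum (fun k _ => ?_) ⟨a + 1, mem_range.2 (by omega), ?_⟩
  · have := sum_range_add_ite_of_transfer hr k
    split_ifs at this <;> omega
  · have := sum_range_add_ite_of_transfer hr (a + 1)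
    simp only [lt_add_one, if_true, show ¬b < a + 1 by omega, if_false] at this
    omega

end Transfer

namespace Majorizes

variable {N : ℕ} {lam nu : ℕ → ℕ}

theorem exists_lt (h : Majorizes N lam nu) (hnu : ∀ i, N ≤ i → nu i = 0) (hne : lam ≠ nu) :
    ∃ b, lam b < nu b := by
  by_contra! hge
  refine hne (funext fun i => ?_)
  by_cases hi : i < N
  · exact ((sum_eq_sum_iff_of_le fun i _ => hge i).1 h.2.1.symm i (mem_range.2 hi)).symm
  · rw [h.1 i (by omega), hnu i (by omega)]

theorem exists_transfer (h : Majorizes N lam nu) (hnu_anti : ∀ i, nu (i + 1) ≤ nu i)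
    (hnu : ∀ i, N ≤ i → nu i = 0) (hne : lam ≠ nu) :
    ∃ a b lam', a < b ∧ b < N ∧ lam b < lam a ∧
      lam' + Pi.single a 1 = lam + Pi.single b 1 ∧ Majorizes N lam' nu := by
  have hex := h.exists_lt hnu hne
  obtain ⟨hsupp, htot, hmaj⟩ := h
  obtain ⟨b, hb, hdom⟩ : ∃ b, lam b < nu b ∧ ∀ i < b, nu i ≤ lam i :=
    ⟨Nat.find hex, Nat.find_spec hex, fun i hi => not_lt.1 (Nat.find_min hex hi)⟩
  have hbN : b < N := by
    by_contra
    rw [hnu b (by omega)] at hb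
    omega
  obtain ⟨a, ha, hlt⟩ : ∃ a ∈ range b, nu a < lam a := by
    refine exists_lt_of_sum_lt ?_
    have := hmaj (b + 1)
    rw [sum_range_succ, sum_range_succ] at this
    omega
  rw [mem_range] at ha
  have hba : lam b < lam a := hb.trans ((antitone_nat_of_succ_le hnu_anti ha.le).trans_lt hlt)
  have hr : lam + Pi.single b 1 - Pi.single a 1 + Pi.single a 1 = lam + Pi.single b 1 := by
    funext i
    simp only [Pi.add_apply, Pi.sub_apply, Pi.single_apply]
    split_ifs <;> subst_vars <;> omega
  have hsum := sum_range_add_ite_of_transfer hr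
  refine ⟨a, b, _, ha, hbN, hba, hr, fun i hi => ?_, ?_, fun k => ?_⟩
  · simp [show i ≠ a by omega, show i ≠ b by omega, hsupp i hi]
  · have := hsum N
    simp only [show a < N by omega, hbN, if_true] at this
    omega
  · have hmid : a < k → k ≤ b → ∑ i ∈ range k, nu i < ∑ i ∈ range k, lam i := fun hak hkb =>
      sum_lt_sum (fun i hi => hdom i (by rw [mem_range] at hi; omega)) ⟨a, mem_range.2 hak, hlt⟩
    have hk := hsum k
    have := hmaj k
    split_ifs at hk <;> omega

end Majorizes

theorem contTables_le_of_majorizes {N : ℕ} {lam nu : ℕ → ℕ} (mu : ℕ → ℕ)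
    (hnu_anti : ∀ i, nu (i + 1) ≤ nu i) (hnu : ∀ i, N ≤ i → nu i = 0) (h : Majorizes N lam nu) :
    contTables N lam mu ≤ contTables N nu mu := by
  induction hΦ : ∑ k ∈ range N, ∑ i ∈ range k, lam i using Nat.strong_induction_on
    generalizing lam with
  | _ n ih =>
  by_cases hne : lam = nu
  · rw [hne]
  obtain ⟨a, b, lam', hab, hbN, hba, hr, h'⟩ := h.exists_transfer hnu_anti hnu hne
  exact (contTables_le_of_transfer (hab.trans hbN) hbN hba hr).trans
    (ih _ (hΦ ▸ sum_partialSums_lt_of_transfer hr hab hbN) h' rfl)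

theorem barvinok_inequality_general (N : ℕ) (lam mu nu tau : ℕ → ℕ)
    (hnu_dec : ∀ i, nu (i + 1) ≤ nu i) (htau_dec : ∀ i, tau (i + 1) ≤ tau i)
    (hlam_supp : ∀ i, N ≤ i → lam i = 0) (hmu_supp : ∀ i, N ≤ i → mu i = 0)
    (hnu_supp : ∀ i, N ≤ i → nu i = 0) (htau_supp : ∀ i, N ≤ i → tau i = 0)
    (htot1 : ∑ i ∈ Finset.range N, lam i = ∑ i ∈ Finset.range N, nu i)
    (htot2 : ∑ i ∈ Finset.range N, mu i = ∑ i ∈ Finset.range N, tau i)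
    (hmaj1 : ∀ k, ∑ i ∈ Finset.range k, nu i ≤ ∑ i ∈ Finset.range k, lam i)
    (hmaj2 : ∀ k, ∑ i ∈ Finset.range k, tau i ≤ ∑ i ∈ Finset.range k, mu i) :
    contTables N lam mu ≤ contTables N nu tau :=
  calc contTables N lam mu
      ≤ contTables N nu mu :=
        contTables_le_of_majorizes mu hnu_dec hnu_supp ⟨hlam_supp, htot1, hmaj1⟩
    _ = contTables N mu nu := contTables_comm N nu mu
    _ ≤ contTables N tau nu :=
        contTables_le_of_majorizes nu htau_dec htau_supp ⟨hmu_supp, htot2, hmaj2⟩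
    _ = contTables N nu tau := contTables_comm N tau nu

/-- Barvinok's inequality: if `λ ⊵ ν` and `μ ⊵ τ` (majorization with equal
total sums), then `T(λ,μ) ≤ T(ν,τ)`. Partitions are encoded as weakly
decreasing functions `ℕ → ℕ` supported on `{0, …, N-1}`. -/
theorem barvinok_inequality (N : ℕ) (lam mu nu tau : ℕ → ℕ)
    (hlam_dec : ∀ i, lam (i + 1) ≤ lam i) (hmu_dec : ∀ i, mu (i + 1) ≤ mu i)
    (hnu_dec : ∀ i, nu (i + 1) ≤ nu i) (htau_dec : ∀ i, tau (i + 1) ≤ tau i)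
    (hlam_supp : ∀ i, N ≤ i → lam i = 0) (hmu_supp : ∀ i, N ≤ i → mu i = 0)
    (hnu_supp : ∀ i, N ≤ i → nu i = 0) (htau_supp : ∀ i, N ≤ i → tau i = 0)
    (htot1 : ∑ i ∈ Finset.range N, lam i = ∑ i ∈ Finset.range N, nu i)
    (htot2 : ∑ i ∈ Finset.range N, mu i = ∑ i ∈ Finset.range N, tau i)
    (hmaj1 : ∀ k, ∑ i ∈ Finset.range k, nu i ≤ ∑ i ∈ Finset.range k, lam i)
    (hmaj2 : ∀ k, ∑ i ∈ Finset.range k, tau i ≤ ∑ i ∈ Finset.range k, mu i) :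
    contTables N lam mu ≤ contTables N nu tau :=
  barvinok_inequality_general N lam mu nu tau hnu_dec htau_dec hlam_supp hmu_supp hnu_supp htau_supp
    htot1 htot2 hmaj1 hmaj2
end
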